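/- arXiv:2211.12984 — 3 statements merged into one kernel-verified Lean document; each statement's English description precedes it below -/
import Mathlib

section
/- Let Ω be a quiver whose underlying graph is a tree, and define a strict relation ≺ on the set Ω_1 of arrows by f ≺ e iff f is behind e and e is in front of f. Then Ω is eventually outward if and only if ≺ has no infinite strictly descending chains (is well-founded). -/
attribute [local instance] Classical.propDecidable

/-- A quiver in the sense of the paper: a set of vertices, a set of arrows,
and source and target functions. -/
structure Qvr where
  V : Type
  A : Type
  s : A → V
  t : A → V

namespace Qvr

variable (Ω : Qvr)

/-- The underlying (simple) graph of a quiver: `i` and `j` are adjacent iff they are joined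
by some arrow. -/
def graph : SimpleGraph Ω.V where
  Adj i j := i ≠ j ∧ ∃ a, (Ω.s a = i ∧ Ω.t a = j) ∨ (Ω.s a = j ∧ Ω.t a = i)
  symm := by
    constructor
    rintro i j ⟨h1, a, h2⟩
    exact ⟨h1.symm, a, h2.symm⟩
  loopless := by
    constructor
    rintro i ⟨h1, -⟩
    exact h1 rfl

/-- The quiver "has an underlying graph": no arrow is a loop, and each pair of vertices is
joined by at most one arrow. -/
def Simple : Prop :=
  (∀ a, Ω.s a ≠ Ω.t a) ∧
    ∀ a b, ({Ω.s a, Ω.t a} : Set Ω.V) = {Ω.s b, Ω.t b} → a = b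

/-- A vertex `i` is *behind* the arrow `e` if it lies in the connected component of `s e`
after the (edge of the) arrow `e` is removed from the underlying graph. -/
def Behind (e : Ω.A) (i : Ω.V) : Prop :=
  ((Ω.graph.deleteEdges {s(Ω.s e, Ω.t e)}).Reachable (Ω.s e) i)

/-- A vertex `i` is *in front of* the arrow `e` if it lies in the connected component of
`t e` after the (edge of the) arrow `e` is removed from the underlying graph. -/
def InFront (e : Ω.A) (i : Ω.V) : Prop :=
  ((Ω.graph.deleteEdges {s(Ω.s e, Ω.t e)}).Reachable (Ω.t e) i)

/-- The arrow `f` is behind the arrow `e` (both of its endpoints are). -/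
def ABehind (f e : Ω.A) : Prop := Ω.Behind e (Ω.s f) ∧ Ω.Behind e (Ω.t f)

/-- The arrow `e` is in front of the arrow `f` (both of its endpoints are). -/
def AInFront (e f : Ω.A) : Prop := Ω.InFront f (Ω.s e) ∧ Ω.InFront f (Ω.t e)

/-- The strict relation `≺` on arrows: `f ≺ e` iff `f` is behind `e` and `e` is in front
of `f`. -/
def Prec (f e : Ω.A) : Prop := Ω.ABehind f e ∧ Ω.AInFront e f

/-- A (finite or one-sided infinite) journey in `Ω`: a walk together with a starting vertex.
It visits the vertices `vtx 0, vtx 1, …, vtx len` (all `n : ℕ` when `len = ⊤`), crossing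
for each `n < len` the arrow `arr n`, which joins `vtx n` and `vtx (n+1)` in some direction.
(The values of `vtx` and `arr` beyond `len` are irrelevant.) -/
structure Journey (Ω : Qvr) where
  len : ℕ∞
  vtx : ℕ → Ω.V
  arr : ℕ → Ω.A
  compat : ∀ n : ℕ, (n : ℕ∞) < len →
    (Ω.s (arr n) = vtx n ∧ Ω.t (arr n) = vtx (n + 1)) ∨
      (Ω.s (arr n) = vtx (n + 1) ∧ Ω.t (arr n) = vtx n)

/-- A journey is injective if it visits no vertex twice. -/
def Journey.Inj {Ω : Qvr} (w : Journey Ω) : Prop :=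
  ∀ m n : ℕ, (m : ℕ∞) ≤ w.len → (n : ℕ∞) ≤ w.len → w.vtx m = w.vtx n → m = n

/-- The `n`-th arrow of the journey `w` is oriented inconsistently (crossed from target to
source). -/
def Journey.Inconsistent {Ω : Qvr} (w : Journey Ω) (n : ℕ) : Prop :=
  Ω.s (w.arr n) = w.vtx (n + 1) ∧ Ω.t (w.arr n) = w.vtx n

/-- `Ω` is eventually outward if every injective journey contains at most finitely many
arrows oriented inconsistently. -/
def EventuallyOutward : Prop :=
  ∀ w : Journey Ω, w.Inj → {n : ℕ | (n : ℕ∞) < w.len ∧ w.Inconsistent n}.Finite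

/-- `Ω` is finitely branched if it is the union of finitely many injective walks
(equivalently, journeys). -/
def FinitelyBranched : Prop :=
  ∃ (k : ℕ) (J : Fin k → Journey Ω), (∀ m, (J m).Inj) ∧
    (∀ i : Ω.V, ∃ (m : Fin k) (n : ℕ), (n : ℕ∞) ≤ (J m).len ∧ (J m).vtx n = i) ∧
    (∀ a : Ω.A, ∃ (m : Fin k) (n : ℕ), (n : ℕ∞) < (J m).len ∧ (J m).arr n = a)

end Qvr

section Aux

open SimpleGraph Walk

/-! ### General graph lemmas -/

variable {V : Type} {G : SimpleGraph V}

lemma Aux.reach_of_mem_support {u v x : V} (W : G.Walk u v) (h : x ∈ W.support) :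
    G.Reachable u x := ⟨W.takeUntil x h⟩

lemma Aux.path_loop_nil {v : V} {p : G.Walk v v} (hp : p.IsPath) : p = Walk.nil := by
  cases p with
  | nil => rfl
  | cons h q =>
    rw [Walk.cons_isPath_iff] at hp
    exact (hp.2 q.end_mem_support).elim

lemma Aux.isPath_append {u v w : V} {p : G.Walk u v} {q : G.Walk v w}
    (hp : p.IsPath) (hq : q.IsPath)
    (h : ∀ x ∈ p.support, x ∈ q.support → x = v) : (p.append q).IsPath := by
  rw [Walk.isPath_def, Walk.support_append]
  refine hp.support_nodup.append ?_ ?_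
  · have := hq.support_nodup
    rw [q.support_eq_cons] at this
    exact this.of_cons
  · intro x hxp hxq
    have hxq' : x ∈ q.support := by
      rw [q.support_eq_cons]; exact List.mem_cons_of_mem _ hxq
    have hxv : x = v := h x hxp hxq'
    subst hxv
    have := hq.support_nodup
    rw [q.support_eq_cons] at this
    exact (List.nodup_cons.1 this).1 hxq

lemma Aux.getVert_inj {u v : V} {p : G.Walk u v} (hp : p.IsPath) :
    ∀ {i j : ℕ}, i ≤ p.length → j ≤ p.length → p.getVert i = p.getVert j → i = j := by
  induction p with
  | nil =>
    intro i j hi hj _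
    simp only [Walk.length_nil, Nat.le_zero] at hi hj
    omega
  | @cons a b c h q ih =>
    rw [Walk.cons_isPath_iff] at hp
    intro i j hi hj hij
    match i, j with
    | 0, 0 => rfl
    | 0, (j+1) =>
      exfalso
      rw [Walk.getVert_zero, Walk.getVert_cons_succ] at hij
      exact hp.2 (Walk.mem_support_iff_exists_getVert.2 ⟨j, hij.symm, by
        simpa [Nat.succ_le_succ_iff] using hj⟩)
    | (i+1), 0 =>
      exfalso
      rw [Walk.getVert_zero, Walk.getVert_cons_succ] at hij
      exact hp.2 (Walk.mem_support_iff_exists_getVert.2 ⟨i, hij, by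
        simpa [Nat.succ_le_succ_iff] using hi⟩)
    | (i+1), (j+1) =>
      rw [Walk.getVert_cons_succ, Walk.getVert_cons_succ] at hij
      have := ih hp.1 (by simpa [Nat.succ_le_succ_iff] using hi)
        (by simpa [Nat.succ_le_succ_iff] using hj) hij
      omega

lemma Aux.no_descending {α : Type} {r : α → α → Prop} (hWF : WellFounded r)
    {f : ℕ → α} (hf : ∀ n, r (f (n + 1)) (f n)) : False := by
  have h : ∀ x, ∀ n, f n = x → False := by
    intro x
    induction x using WellFounded.induction hWF with
    | _ x ih =>
      intro n hn
      exact ih (f (n + 1)) (hn ▸ hf n) (n + 1) rfl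
  exact h (f 0) 0 rfl

lemma Aux.exists_descending {α : Type} {r : α → α → Prop} (h : ¬ WellFounded r) :
    ∃ f : ℕ → α, ∀ n, r (f (n + 1)) (f n) := by
  obtain ⟨a, ha⟩ : ∃ a, ¬ Acc r a := by
    by_contra h'
    push_neg at h'
    exact h ⟨fun x => h' x⟩
  have step : ∀ x : {a : α // ¬ Acc r a}, ∃ y : {a : α // ¬ Acc r a}, r y.1 x.1 := by
    rintro ⟨x, hx⟩
    obtain ⟨b, hb1, hb2⟩ := exists_not_acc_lt_of_not_acc hx
    exact ⟨⟨b, hb1⟩, hb2⟩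
  choose g hg using step
  refine ⟨fun n => (g^[n] ⟨a, ha⟩).1, fun n => ?_⟩
  simp only [Function.iterate_succ', Function.comp_apply]
  exact hg _

end Aux

namespace Qvr

variable {Ω : Qvr}

open SimpleGraph Walk

lemma graph_adj (hS : Ω.Simple) (e : Ω.A) : Ω.graph.Adj (Ω.s e) (Ω.t e) :=
  ⟨hS.1 e, e, Or.inl ⟨rfl, rfl⟩⟩

lemma not_reach (hS : Ω.Simple) (hT : Ω.graph.IsTree) (e : Ω.A) :
    ¬ (Ω.graph.deleteEdges {s(Ω.s e, Ω.t e)}).Reachable (Ω.s e) (Ω.t e) := by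
  have hb := SimpleGraph.isAcyclic_iff_forall_adj_isBridge.1 hT.IsAcyclic (graph_adj hS e)
  exact SimpleGraph.isBridge_iff.1 hb

lemma not_both (hS : Ω.Simple) (hT : Ω.graph.IsTree) (e : Ω.A) {x : Ω.V}
    (hb : Ω.Behind e x) (hf : Ω.InFront e x) : False :=
  not_reach hS hT e (hb.trans hf.symm)

lemma step_or (e : Ω.A) {y z : Ω.V} (h : Ω.graph.Adj y z) :
    (Ω.Behind e y ∨ Ω.InFront e y) → (Ω.Behind e z ∨ Ω.InFront e z) := by
  intro hy
  by_cases hedge : s(y, z) = s(Ω.s e, Ω.t e)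
  · rw [Sym2.eq_iff] at hedge
    rcases hedge with ⟨_, rfl⟩ | ⟨_, rfl⟩
    · exact Or.inr (Reachable.refl _)
    · exact Or.inl (Reachable.refl _)
  · have h' : (Ω.graph.deleteEdges {s(Ω.s e, Ω.t e)}).Adj y z := by
      rw [SimpleGraph.deleteEdges_adj]
      exact ⟨h, by simpa using hedge⟩
    rcases hy with hy | hy
    · exact Or.inl (hy.trans h'.reachable)
    · exact Or.inr (hy.trans h'.reachable)

lemma behind_or_inFront (hT : Ω.graph.IsTree) (e : Ω.A) (x : Ω.V) :
    Ω.Behind e x ∨ Ω.InFront e x := by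
  obtain ⟨W⟩ := hT.isConnected.preconnected (Ω.s e) x
  have key : ∀ {y z : Ω.V} (W : Ω.graph.Walk y z),
      (Ω.Behind e y ∨ Ω.InFront e y) → Ω.Behind e z ∨ Ω.InFront e z := by
    intro y z W
    induction W with
    | nil => exact id
    | cons h p ih => exact fun hy => ih (step_or e h hy)
  exact key W (Or.inl (Reachable.refl _))

lemma behind_trans (hS : Ω.Simple) (hT : Ω.graph.IsTree) {e f : Ω.A} (hp : Ω.Prec f e)
    {x : Ω.V} (hx : Ω.Behind f x) : Ω.Behind e x := by
  obtain ⟨W⟩ := hx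
  by_cases he : s(Ω.s e, Ω.t e) ∈ W.edges
  · exfalso
    have ht : Ω.t e ∈ W.support := W.snd_mem_support_of_mem_edges he
    exact not_both hS hT f (Aux.reach_of_mem_support W ht) hp.2.2
  · have hsub : ∀ e' ∈ W.edges, e' ∈ Ω.graph.edgeSet := fun e' he' =>
      SimpleGraph.edgeSet_mono (SimpleGraph.deleteEdges_le _) (W.edges_subset_edgeSet he')
    have hW' : ∀ e' ∈ (W.transfer Ω.graph hsub).edges,
        e' ∉ ({s(Ω.s e, Ω.t e)} : Set (Sym2 Ω.V)) := by
      rw [Walk.edges_transfer]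
      intro e' h1 h2
      rw [Set.mem_singleton_iff] at h2
      exact he (h2 ▸ h1)
    exact hp.1.1.trans ⟨(W.transfer Ω.graph hsub).toDeleteEdges _ hW'⟩

lemma inFront_mono (hS : Ω.Simple) (hT : Ω.graph.IsTree) {e f : Ω.A} (hp : Ω.Prec f e)
    {x : Ω.V} (hx : Ω.InFront e x) : Ω.InFront f x :=
  (behind_or_inFront hT f x).resolve_left fun hb =>
    not_both hS hT e (behind_trans hS hT hp hb) hx

lemma adj_cross (hS : Ω.Simple) (hT : Ω.graph.IsTree) (e : Ω.A) {u w : Ω.V}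
    (h : Ω.graph.Adj u w) (hu : Ω.InFront e u) (hw : Ω.Behind e w) :
    u = Ω.t e ∧ w = Ω.s e := by
  by_cases hedge : s(u, w) = s(Ω.s e, Ω.t e)
  · rw [Sym2.eq_iff] at hedge
    rcases hedge with ⟨rfl, rfl⟩ | ⟨rfl, rfl⟩
    · exact (not_both hS hT e (Reachable.refl _) hu).elim
    · exact ⟨rfl, rfl⟩
  · exfalso
    have h' : (Ω.graph.deleteEdges {s(Ω.s e, Ω.t e)}).Adj u w := by
      rw [SimpleGraph.deleteEdges_adj]
      exact ⟨h, by simpa using hedge⟩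
    exact not_both hS hT e hw (hu.trans h'.reachable)

lemma support_front (hS : Ω.Simple) (hT : Ω.graph.IsTree) (e : Ω.A) :
    ∀ {a b : Ω.V} (W : Ω.graph.Walk a b), b = Ω.s e → W.IsPath → Ω.InFront e a →
      ∀ x ∈ W.support, x = Ω.s e ∨ Ω.InFront e x := by
  intro a b W
  induction W with
  | nil =>
    intro hb _ _ x hx
    rw [Walk.support_nil, List.mem_singleton] at hx
    exact Or.inl (hx.trans hb)
  | @cons a b _ h W ih =>
    intro hbb hp ha x hx
    subst hbb
    rcases behind_or_inFront hT e b with hb | hbf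
    · obtain ⟨ha', hb'⟩ := adj_cross hS hT e h ha hb
      subst hb'
      have hW : W = Walk.nil := Aux.path_loop_nil ((Walk.cons_isPath_iff _ _).1 hp).1
      subst hW
      simp only [Walk.support_cons, Walk.support_nil, List.mem_cons,
        List.mem_singleton] at hx
      rcases hx with rfl | rfl | h
      · exact Or.inr ha
      · exact Or.inl rfl
      · exact absurd h (by simp)
    · rw [Walk.support_cons, List.mem_cons] at hx
      rcases hx with rfl | hx
      · exact Or.inr ha
      · exact ih rfl ((Walk.cons_isPath_iff _ _).1 hp).1 hbf x hx

lemma chain_step (hS : Ω.Simple) (hT : Ω.graph.IsTree) {f : ℕ → Ω.A}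
    (hf : ∀ n, Ω.Prec (f (n + 1)) (f n)) (hfront : ∀ n, Ω.InFront (f n) (Ω.t (f 0)))
    (n : ℕ) (c : Ω.graph.Walk (Ω.t (f 0)) (Ω.s (f n))) (hc : c.IsPath) :
    ∃ c' : Ω.graph.Walk (Ω.t (f 0)) (Ω.s (f (n + 1))), c'.IsPath ∧
      c.length + 1 ≤ c'.length ∧ ∀ k ≤ c.length, c'.getVert k = c.getVert k := by
  obtain ⟨d0⟩ : (Ω.graph.deleteEdges {s(Ω.s (f n), Ω.t (f n))}).Reachable
      (Ω.s (f n)) (Ω.s (f (n + 1))) := (hf n).1.1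
  set d1 : (Ω.graph.deleteEdges {s(Ω.s (f n), Ω.t (f n))}).Walk (Ω.s (f n)) (Ω.s (f (n + 1))) :=
    (d0.toPath).val with hd1
  have hd1path : d1.IsPath := d0.toPath.2
  have hsub : ∀ e' ∈ d1.edges, e' ∈ Ω.graph.edgeSet := fun e' he' =>
    SimpleGraph.edgeSet_mono (SimpleGraph.deleteEdges_le _) (d1.edges_subset_edgeSet he')
  set d : Ω.graph.Walk (Ω.s (f n)) (Ω.s (f (n + 1))) := d1.transfer Ω.graph hsub with hd
  have hd_path : d.IsPath := hd1path.transfer hsub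
  have hd_supp : ∀ x ∈ d.support, Ω.Behind (f n) x := by
    intro x hx
    rw [hd, Walk.support_transfer] at hx
    exact Aux.reach_of_mem_support d1 hx
  have hjunc : ∀ x ∈ c.support, x ∈ d.support → x = Ω.s (f n) := by
    intro x hxc hxd
    rcases support_front hS hT (f n) c rfl hc (hfront n) x hxc with h | h
    · exact h
    · exact (not_both hS hT (f n) (hd_supp x hxd) h).elim
  refine ⟨c.append d, Aux.isPath_append hc hd_path hjunc, ?_, ?_⟩
  · rw [Walk.length_append]
    have hd0 : d.length ≠ 0 := by
      intro h0
      have heq := Walk.eq_of_length_eq_zero h0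
      have h1 : Ω.InFront (f (n + 1)) (Ω.s (f n)) := (hf n).2.1
      rw [heq] at h1
      exact not_both hS hT (f (n + 1)) (Reachable.refl _) h1
    omega
  · intro k hk
    rw [Walk.getVert_append]
    rcases lt_or_eq_of_le hk with h | h
    · rw [if_pos h]
    · rw [h, if_neg (lt_irrefl _), Nat.sub_self, Walk.getVert_zero, Walk.getVert_length]

/-! ### Journey lemmas -/

lemma journey_adj (w : Journey Ω) (hw : w.Inj) {j : ℕ} (hj : (j : ℕ∞) < w.len) :
    Ω.graph.Adj (w.vtx j) (w.vtx (j + 1)) := by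
  have hj1 : ((j + 1 : ℕ) : ℕ∞) ≤ w.len := by
    push_cast
    exact (ENat.add_one_le_iff (ENat.coe_ne_top j)).2 hj
  refine ⟨fun hne => ?_, w.arr j, w.compat j hj⟩
  have := hw j (j + 1) hj.le hj1 hne
  omega

lemma journey_edge_ne (w : Journey Ω) (hw : w.Inj) {j m : ℕ}
    (hj : (j : ℕ∞) < w.len) (hm : (m : ℕ∞) < w.len) (hne : j ≠ m) :
    s(w.vtx j, w.vtx (j + 1)) ≠ s(w.vtx m, w.vtx (m + 1)) := by
  have hj1 : ((j + 1 : ℕ) : ℕ∞) ≤ w.len := by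
    push_cast
    exact (ENat.add_one_le_iff (ENat.coe_ne_top j)).2 hj
  have hm1 : ((m + 1 : ℕ) : ℕ∞) ≤ w.len := by
    push_cast
    exact (ENat.add_one_le_iff (ENat.coe_ne_top m)).2 hm
  intro h
  rw [Sym2.eq_iff] at h
  rcases h with ⟨h1, _⟩ | ⟨h1, h2⟩
  · exact hne (hw j m hj.le hm.le h1)
  · have e1 : j = m + 1 := hw j (m + 1) hj.le hm1 h1
    have e2 : j + 1 = m := hw (j + 1) m hj1 hm.le h2
    omega

lemma journey_reach_forward (w : Journey Ω) (hw : w.Inj) {m : ℕ} (hm : (m : ℕ∞) < w.len) :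
    ∀ j : ℕ, (j : ℕ∞) ≤ w.len → m + 1 ≤ j →
      (Ω.graph.deleteEdges {s(w.vtx m, w.vtx (m + 1))}).Reachable (w.vtx (m + 1)) (w.vtx j) := by
  intro j
  induction j with
  | zero => intro _ h; omega
  | succ j ih =>
    intro hjlen hj
    rcases Nat.lt_or_ge (m + 1) (j + 1) with h | h
    · have hj' : m + 1 ≤ j := by omega
      have hjlt : (j : ℕ∞) < w.len := by
        refine lt_of_lt_of_le ?_ hjlen
        exact_mod_cast Nat.lt_succ_self j
      have hjlen' : (j : ℕ∞) ≤ w.len := hjlt.le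
      refine (ih hjlen' hj').trans ?_
      have hadj : (Ω.graph.deleteEdges {s(w.vtx m, w.vtx (m + 1))}).Adj (w.vtx j)
          (w.vtx (j + 1)) := by
        rw [SimpleGraph.deleteEdges_adj]
        refine ⟨journey_adj w hw hjlt, ?_⟩
        simpa using journey_edge_ne w hw hjlt hm (by omega)
      exact hadj.reachable
    · have : j + 1 = m + 1 := by omega
      rw [this]

lemma journey_reach_backward (w : Journey Ω) (hw : w.Inj) {m : ℕ} (hm : (m : ℕ∞) < w.len) :
    ∀ j : ℕ, j ≤ m →
      (Ω.graph.deleteEdges {s(w.vtx m, w.vtx (m + 1))}).Reachable (w.vtx j) (w.vtx m) := by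
  have key : ∀ d : ℕ,
      (Ω.graph.deleteEdges {s(w.vtx m, w.vtx (m + 1))}).Reachable (w.vtx (m - d)) (w.vtx m) := by
    intro d
    induction d with
    | zero =>
      rw [Nat.sub_zero]
    | succ d ih =>
      rcases Nat.lt_or_ge d m with h | h
      · have hi : m - (d + 1) + 1 = m - d := by omega
        have hilt : ((m - (d + 1) : ℕ) : ℕ∞) < w.len := by
          refine lt_of_le_of_lt ?_ hm
          exact_mod_cast Nat.sub_le m (d + 1)
        have hadj : (Ω.graph.deleteEdges {s(w.vtx m, w.vtx (m + 1))}).Adj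
            (w.vtx (m - (d + 1))) (w.vtx (m - (d + 1) + 1)) := by
          rw [SimpleGraph.deleteEdges_adj]
          refine ⟨journey_adj w hw hilt, ?_⟩
          simpa using journey_edge_ne w hw hilt hm (by omega)
        rw [hi] at hadj
        exact hadj.reachable.trans ih
      · have : m - (d + 1) = m - d := by omega
        rw [this]
        exact ih
  intro j hj
  have : m - (m - j) = j := by omega
  exact this ▸ key (m - j)

end Qvr

/-- Let `Ω` be a quiver whose underlying graph is a tree, and define a
strict relation `≺` on the set of arrows by `f ≺ e` iff `f` is behind `e` and `e` is in
front of `f`.  Then `Ω` is eventually outward if and only if `≺` is well-founded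
(has no infinite strictly descending chains). -/
theorem stmt0 (Ω : Qvr) (hS : Ω.Simple) (hT : Ω.graph.IsTree) :
    Ω.EventuallyOutward ↔ WellFounded Ω.Prec := by
  constructor
  · -- eventually outward → well-founded
    intro hEO
    by_contra hWF
    obtain ⟨f, hf⟩ := Aux.exists_descending hWF
    have hfront : ∀ n, Ω.InFront (f n) (Ω.t (f 0)) := by
      intro n
      induction n with
      | zero => exact SimpleGraph.Reachable.refl _
      | succ n ih => exact Qvr.inFront_mono hS hT (hf n) ih
    have hc0 : ((Qvr.graph_adj hS (f 0)).symm.toWalk).IsPath := by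
      rw [show (Qvr.graph_adj hS (f 0)).symm.toWalk
          = SimpleGraph.Walk.cons (Qvr.graph_adj hS (f 0)).symm SimpleGraph.Walk.nil from rfl,
        SimpleGraph.Walk.cons_isPath_iff]
      refine ⟨SimpleGraph.Walk.IsPath.nil, ?_⟩
      rw [SimpleGraph.Walk.support_nil, List.mem_singleton]
      exact fun h => hS.1 (f 0) h.symm
    let D : ∀ n : ℕ, {c : Ω.graph.Walk (Ω.t (f 0)) (Ω.s (f n)) // c.IsPath} := fun n =>
      Nat.rec ⟨(Qvr.graph_adj hS (f 0)).symm.toWalk, hc0⟩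
        (fun n p => ⟨Classical.choose (Qvr.chain_step hS hT hf hfront n p.1 p.2),
          (Classical.choose_spec (Qvr.chain_step hS hT hf hfront n p.1 p.2)).1⟩) n
    have hDsucc : ∀ n, (D n).1.length + 1 ≤ (D (n + 1)).1.length ∧
        ∀ k ≤ (D n).1.length, (D (n + 1)).1.getVert k = (D n).1.getVert k :=
      fun n => (Classical.choose_spec (Qvr.chain_step hS hT hf hfront n (D n).1 (D n).2)).2
    have hlen : ∀ n, n + 1 ≤ (D n).1.length := by
      intro n
      induction n with
      | zero =>
        have h0 : (D 0).1.length = 1 := rfl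
        omega
      | succ n ih =>
        have := (hDsucc n).1
        omega
    have hmono : ∀ {a b : ℕ}, a ≤ b → (D a).1.length ≤ (D b).1.length := by
      intro a b h
      induction b, h using Nat.le_induction with
      | base => exact le_rfl
      | succ b hb ih =>
        have := (hDsucc b).1
        omega
    have hpre : ∀ {n m k : ℕ}, n ≤ m → k ≤ (D n).1.length →
        (D m).1.getVert k = (D n).1.getVert k := by
      intro n m k h hk
      induction m, h using Nat.le_induction with
      | base => rfl
      | succ m hm ih =>
        rw [(hDsucc m).2 k (hk.trans (hmono hm)), ih]
    let vt : ℕ → Ω.V := fun k => (D k).1.getVert k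
    have hvt : ∀ (m k : ℕ), k ≤ m → vt k = (D m).1.getVert k := fun m k h =>
      (hpre h (by have := hlen k; omega)).symm
    have hvt' : ∀ (n k : ℕ), n ≤ k → k ≤ (D n).1.length → vt k = (D n).1.getVert k :=
      fun n k h hk => hpre h hk
    have hadj : ∀ k, Ω.graph.Adj (vt k) (vt (k + 1)) := by
      intro k
      have h1 : k < (D (k + 1)).1.length := by have := hlen (k + 1); omega
      have h := (D (k + 1)).1.adj_getVert_succ h1
      rwa [← hvt (k + 1) k k.le_succ, ← hvt (k + 1) (k + 1) le_rfl] at h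
    have har : ∀ k, ∃ a, (Ω.s a = vt k ∧ Ω.t a = vt (k + 1)) ∨
        (Ω.s a = vt (k + 1) ∧ Ω.t a = vt k) := fun k => (hadj k).2
    let w : Qvr.Journey Ω := ⟨⊤, vt, fun k => Classical.choose (har k),
      fun n _ => Classical.choose_spec (har n)⟩
    have hwinj : w.Inj := by
      intro m n _ _ hmn
      have key : ∀ a b : ℕ, a ≤ b → vt a = vt b → a = b := by
        intro a b hab hv
        rw [hvt b a hab, hvt b b le_rfl] at hv
        exact Aux.getVert_inj (D b).2 (by have := hlen b; omega) (by have := hlen b; omega) hv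
      rcases le_total m n with h | h
      · exact key m n h hmn
      · exact (key n m h hmn.symm).symm
    have hpos : ∀ n : ℕ, ((D n).1.length - 1 : ℕ) ∈
        {k : ℕ | (k : ℕ∞) < w.len ∧ w.Inconsistent k} := by
      intro n
      have hLn : n + 1 ≤ (D n).1.length := hlen n
      set L := (D n).1.length with hLdef
      have hsucc : L - 1 + 1 = L := by omega
      have hk2 : vt L = Ω.s (f n) := by
        rw [hvt' n L (by omega) hLdef.le]
        exact SimpleGraph.Walk.getVert_length _
      have hv_mem : (D n).1.getVert (L - 1) ∈ (D n).1.support :=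
        SimpleGraph.Walk.mem_support_iff_exists_getVert.2 ⟨L - 1, rfl, by omega⟩
      have hv_ne : (D n).1.getVert (L - 1) ≠ Ω.s (f n) := by
        intro hEq
        have h2 : (D n).1.getVert (L - 1) = (D n).1.getVert L := by
          rw [hEq, hLdef]
          exact (SimpleGraph.Walk.getVert_length _).symm
        have := Aux.getVert_inj (D n).2 (by omega) hLdef.le h2
        omega
      have hfrontv : Ω.InFront (f n) ((D n).1.getVert (L - 1)) :=
        (Qvr.support_front hS hT (f n) (D n).1 rfl (D n).2 (hfront n) _ hv_mem).resolve_left hv_ne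
      have hadjv : Ω.graph.Adj ((D n).1.getVert (L - 1)) (Ω.s (f n)) := by
        have h := (D n).1.adj_getVert_succ (i := L - 1) (by omega)
        rw [hsucc] at h
        rwa [show (D n).1.getVert L = Ω.s (f n) by rw [hLdef]; exact SimpleGraph.Walk.getVert_length _] at h
      have hcross := Qvr.adj_cross hS hT (f n) hadjv hfrontv (SimpleGraph.Reachable.refl _)
      have hk1 : vt (L - 1) = Ω.t (f n) := by
        rw [hvt' n (L - 1) (by omega) (by omega)]
        exact hcross.1
      refine ⟨ENat.coe_lt_top _, ?_⟩
      rcases Classical.choose_spec (har (L - 1)) with ⟨h1, h2⟩ | ⟨h1, h2⟩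
      · exfalso
        have heq : ({Ω.s (Classical.choose (har (L - 1))),
            Ω.t (Classical.choose (har (L - 1)))} : Set Ω.V) = {Ω.s (f n), Ω.t (f n)} := by
          rw [h1, h2, hk1, hsucc, hk2]
          exact Set.pair_comm _ _
        have hae := hS.2 _ _ heq
        rw [hae] at h1
        exact hS.1 (f n) (h1.trans hk1)
      · exact ⟨h1, h2⟩
    have hinjf : Function.Injective (fun n : ℕ => (D n).1.length - 1) := by
      have hsm : StrictMono (fun n : ℕ => (D n).1.length - 1) := by
        intro a b h
        have h1 := hlen a
        have h2 : (D a).1.length + 1 ≤ (D b).1.length :=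
          le_trans (hDsucc a).1 (hmono h)
        simp only []
        omega
      exact hsm.injective
    have hinf : {k : ℕ | (k : ℕ∞) < w.len ∧ w.Inconsistent k}.Infinite :=
      Set.infinite_of_injective_forall_mem hinjf hpos
    exact hinf (hEO w hwinj)
  · -- well-founded → eventually outward
    intro hWF w hw
    by_contra hfin
    have hinf : {n : ℕ | (n : ℕ∞) < w.len ∧ w.Inconsistent n}.Infinite := hfin
    set p : ℕ → Prop := fun n => (n : ℕ∞) < w.len ∧ w.Inconsistent n with hp
    have hinf' : (setOf p).Infinite := hinf
    have key : ∀ k l : ℕ, k < l → p k → p l → Ω.Prec (w.arr l) (w.arr k) := by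
      intro k l hkl ⟨hk, hik⟩ ⟨hl, hil⟩
      have hl1 : ((l + 1 : ℕ) : ℕ∞) ≤ w.len := by
        push_cast
        exact (ENat.add_one_le_iff (ENat.coe_ne_top l)).2 hl
      have hk1 : ((k + 1 : ℕ) : ℕ∞) ≤ w.len := by
        push_cast
        exact (ENat.add_one_le_iff (ENat.coe_ne_top k)).2 hk
      have hek : s(Ω.s (w.arr k), Ω.t (w.arr k)) = s(w.vtx k, w.vtx (k + 1)) := by
        rw [hik.1, hik.2, Sym2.eq_swap]
      have hel : s(Ω.s (w.arr l), Ω.t (w.arr l)) = s(w.vtx l, w.vtx (l + 1)) := by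
        rw [hil.1, hil.2, Sym2.eq_swap]
      refine ⟨⟨?_, ?_⟩, ?_, ?_⟩
      · show (Ω.graph.deleteEdges {s(Ω.s (w.arr k), Ω.t (w.arr k))}).Reachable
          (Ω.s (w.arr k)) (Ω.s (w.arr l))
        rw [hek, hik.1, hil.1]
        exact Ω.journey_reach_forward w hw hk (l + 1) hl1 (by omega)
      · show (Ω.graph.deleteEdges {s(Ω.s (w.arr k), Ω.t (w.arr k))}).Reachable
          (Ω.s (w.arr k)) (Ω.t (w.arr l))
        rw [hek, hik.1, hil.2]
        exact Ω.journey_reach_forward w hw hk l hl.le (by omega)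
      · show (Ω.graph.deleteEdges {s(Ω.s (w.arr l), Ω.t (w.arr l))}).Reachable
          (Ω.t (w.arr l)) (Ω.s (w.arr k))
        rw [hel, hil.2, hik.1]
        exact (Ω.journey_reach_backward w hw hl (k + 1) (by omega)).symm
      · show (Ω.graph.deleteEdges {s(Ω.s (w.arr l), Ω.t (w.arr l))}).Reachable
          (Ω.t (w.arr l)) (Ω.t (w.arr k))
        rw [hel, hil.2, hik.2]
        exact (Ω.journey_reach_backward w hw hl k (by omega)).symm
    have hgmem : ∀ n, p (Nat.nth p n) := fun n => Nat.nth_mem_of_infinite hinf' n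
    have hgmono : ∀ n, Nat.nth p n < Nat.nth p (n + 1) := fun n =>
      (Nat.nth_lt_nth hinf').2 (Nat.lt_succ_self n)
    have desc : ∀ n, Ω.Prec (w.arr (Nat.nth p (n + 1))) (w.arr (Nat.nth p n)) := fun n =>
      key _ _ (hgmono n) (hgmem n) (hgmem (n + 1))
    exact Aux.no_descending hWF desc
end

section
/- If α is a nonempty connected full subquiver of an eventually outward finitely branched tree quiver Ω, then there are only finitely many arrows of Ω that point towards α. -/
attribute [local instance] Classical.propDecidable

namespace Qvr

variable (Ω : Qvr)

/-- `S` is the vertex set of a connected (full) subquiver: any two of its vertices are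
joined by a walk inside `S`. -/
def ConnSub (S : Set Ω.V) : Prop :=
  ∀ (i : Ω.V) (hi : i ∈ S) (j : Ω.V) (hj : j ∈ S),
    (Ω.graph.induce S).Reachable ⟨i, hi⟩ ⟨j, hj⟩

/-- The arrow `e` points towards the (full) subquiver with vertex set `S`:
all of `S` lies in front of `e`. -/
def PointsToward (e : Ω.A) (S : Set Ω.V) : Prop := ∀ i ∈ S, Ω.InFront e i

/-- `β` is a *reduction* of `α`: there is an arrow `e` contained in `α` such that `β` is the
portion of `α` behind `e`. -/
def Reduction (α β : Set Ω.V) : Prop :=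
  ∃ e : Ω.A, Ω.s e ∈ α ∧ Ω.t e ∈ α ∧ β = {i ∈ α | Ω.Behind e i}

/-- `β` is an *enhancement* of `α`: there is an arrow `e` contained in `β` such that `α` is
the portion of `β` in front of `e`. -/
def Enhancement (α β : Set Ω.V) : Prop :=
  ∃ e : Ω.A, Ω.s e ∈ β ∧ Ω.t e ∈ β ∧ α = {i ∈ β | Ω.InFront e i}

/-- A single move: `β` is obtained from `α` by a reduction or an enhancement. -/
def Move (α β : Set Ω.V) : Prop := Ω.Reduction α β ∨ Ω.Enhancement α β

/-- The set `𝒞` of connected full subquivers of `Ω` (recorded by their vertex sets). -/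
def CC (Ω : Qvr) := {S : Set Ω.V // Ω.ConnSub S}

/-- The strict order on `𝒞`: `α > β` iff `β` is obtained from `α` by a finite nonempty
sequence of reductions and enhancements. -/
def GtC : Ω.CC → Ω.CC → Prop :=
  Relation.TransGen fun x y : Ω.CC => Ω.Move x.1 y.1

end Qvr


namespace Qvr

variable {Ω : Qvr}

lemma Journey.adj_step (w : Journey Ω) (hw : w.Inj) {n : ℕ} (hn : (n : ℕ∞) < w.len) :
    Ω.graph.Adj (w.vtx n) (w.vtx (n + 1)) := by
  have h2 : ((n + 1 : ℕ) : ℕ∞) ≤ w.len := by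
    push_cast
    exact Order.add_one_le_of_lt hn
  have hne : w.vtx n ≠ w.vtx (n + 1) := by
    intro h
    have := hw n (n + 1) hn.le h2 h
    omega
  rcases w.compat n hn with h | h
  · exact ⟨hne, w.arr n, Or.inl h⟩
  · exact ⟨hne, w.arr n, Or.inr h⟩

lemma cast_lt_succ' (m : ℕ) : (m : ℕ∞) < ((m + 1 : ℕ) : ℕ∞) := by
  exact_mod_cast Nat.lt_succ_self m

/-- The walk in the underlying graph along the first `m` steps of an injective journey. -/
def Journey.prefixWalk (w : Journey Ω) (hw : w.Inj) :
    ∀ (m : ℕ), (m : ℕ∞) ≤ w.len → Ω.graph.Walk (w.vtx 0) (w.vtx m)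
  | 0, _ => SimpleGraph.Walk.nil
  | m + 1, h =>
    (Journey.prefixWalk w hw m ((cast_lt_succ' m).le.trans h)).concat
      (w.adj_step hw (lt_of_lt_of_le (cast_lt_succ' m) h))

lemma Journey.prefixWalk_length (w : Journey Ω) (hw : w.Inj) :
    ∀ (m : ℕ) (h : (m : ℕ∞) ≤ w.len), (w.prefixWalk hw m h).length = m
  | 0, _ => rfl
  | m + 1, h => by
    rw [Journey.prefixWalk, SimpleGraph.Walk.length_concat,
      Journey.prefixWalk_length w hw m _]

lemma Journey.prefixWalk_support (w : Journey Ω) (hw : w.Inj) :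
    ∀ (m : ℕ) (h : (m : ℕ∞) ≤ w.len) (x : Ω.V),
      x ∈ (w.prefixWalk hw m h).support ↔ ∃ i ≤ m, w.vtx i = x
  | 0, _, x => by
    simp only [Journey.prefixWalk, SimpleGraph.Walk.support_nil, List.mem_singleton]
    constructor
    · rintro rfl; exact ⟨0, le_refl 0, rfl⟩
    · rintro ⟨i, hi, rfl⟩; rw [Nat.le_zero.mp hi]
  | m + 1, h, x => by
    rw [Journey.prefixWalk, SimpleGraph.Walk.support_concat, List.mem_append,
      List.mem_singleton,
      Journey.prefixWalk_support w hw m _ x]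
    constructor
    · rintro (⟨i, hi, rfl⟩ | rfl)
      · exact ⟨i, hi.trans (Nat.le_succ m), rfl⟩
      · exact ⟨m + 1, le_refl _, rfl⟩
    · rintro ⟨i, hi, rfl⟩
      rcases Nat.lt_succ_iff_lt_or_eq.mp (Nat.lt_succ_of_le hi) with hi' | rfl
      · exact Or.inl ⟨i, Nat.lt_succ_iff.mp hi', rfl⟩
      · exact Or.inr rfl

lemma Journey.prefixWalk_edges (w : Journey Ω) (hw : w.Inj) :
    ∀ (m : ℕ) (h : (m : ℕ∞) ≤ w.len) (e : Sym2 Ω.V),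
      e ∈ (w.prefixWalk hw m h).edges → ∃ i < m, e = s(w.vtx i, w.vtx (i + 1))
  | 0, _, e => by
    simp [Journey.prefixWalk]
  | m + 1, h, e => by
    rw [Journey.prefixWalk, SimpleGraph.Walk.edges_concat, List.concat_eq_append, List.mem_append,
      List.mem_singleton]
    rintro (he | rfl)
    · obtain ⟨i, hi, rfl⟩ := Journey.prefixWalk_edges w hw m _ e he
      exact ⟨i, hi.trans (Nat.lt_succ_self m), rfl⟩
    · exact ⟨m, Nat.lt_succ_self m, rfl⟩

lemma Journey.prefixWalk_isPath (w : Journey Ω) (hw : w.Inj) :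
    ∀ (m : ℕ) (h : (m : ℕ∞) ≤ w.len), (w.prefixWalk hw m h).IsPath
  | 0, _ => SimpleGraph.Walk.IsPath.nil
  | m + 1, h => by
    rw [SimpleGraph.Walk.isPath_def, Journey.prefixWalk, SimpleGraph.Walk.support_concat,
      ← List.concat_eq_append]
    refine List.Nodup.concat ?_ ?_
    · rw [Journey.prefixWalk_support w hw m _]
      rintro ⟨i, hi, hix⟩
      have hi' : (i : ℕ∞) ≤ w.len := le_trans (by exact_mod_cast hi) ((cast_lt_succ' m).le.trans h)
      have := hw i (m + 1) hi' h hix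
      omega
    · rw [← SimpleGraph.Walk.isPath_def]
      exact Journey.prefixWalk_isPath w hw m _

/-- Key lemma: along a fixed injective journey, only finitely many consistently oriented
steps have a given vertex `v` in front of them. -/
lemma journey_finite_front (hT : Ω.graph.IsTree) (v : Ω.V) (w : Journey Ω) (hw : w.Inj) :
    {n : ℕ | (n : ℕ∞) < w.len ∧ ¬ w.Inconsistent n ∧ Ω.InFront (w.arr n) v}.Finite := by
  obtain ⟨q⟩ := hT.isConnected.preconnected (w.vtx 0) v
  have hpp : q.bypass.IsPath := q.bypass_isPath
  set p := q.bypass with hp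
  apply Set.Finite.subset (Set.finite_Iio p.length)
  rintro n ⟨hn, hninc, hv⟩
  obtain ⟨hs, ht⟩ : Ω.s (w.arr n) = w.vtx n ∧ Ω.t (w.arr n) = w.vtx (n + 1) := by
    rcases w.compat n hn with h | h
    · exact h
    · exact absurd ⟨h.1, h.2⟩ hninc
  have h1 : ((n + 1 : ℕ) : ℕ∞) ≤ w.len := by
    push_cast
    exact Order.add_one_le_of_lt hn
  set e : Sym2 Ω.V := s(w.vtx n, w.vtx (n + 1)) with he
  have hadj := w.adj_step hw hn
  -- the edge is a bridge
  have hbr : ¬ (Ω.graph.deleteEdges {e}).Reachable (w.vtx n) (w.vtx (n + 1)) := by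
    have hb := (SimpleGraph.isAcyclic_iff_forall_edge_isBridge.mp hT.IsAcyclic)
      (show e ∈ Ω.graph.edgeSet from hadj)
    exact SimpleGraph.isBridge_iff.mp hb
  -- `v` lies in front
  have hvfront : (Ω.graph.deleteEdges {e}).Reachable (w.vtx (n + 1)) v := by
    have hv' := hv
    unfold Qvr.InFront at hv'
    rwa [hs, ht] at hv'
  -- the start of the journey lies behind
  have hbk : (Ω.graph.deleteEdges {e}).Reachable (w.vtx 0) (w.vtx n) := by
    refine ⟨(w.prefixWalk hw n hn.le).toDeleteEdges {e} ?_⟩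
    intro f hf
    obtain ⟨i, hi, rfl⟩ := w.prefixWalk_edges hw n hn.le f hf
    rw [Set.mem_singleton_iff, he, Sym2.eq_iff]
    have hi1 : ((i + 1 : ℕ) : ℕ∞) ≤ w.len :=
      le_trans (by exact_mod_cast hi : ((i + 1 : ℕ) : ℕ∞) ≤ (n : ℕ∞)) hn.le
    have hile : (i : ℕ∞) ≤ w.len := le_trans (cast_lt_succ' i).le hi1
    rintro (⟨hia, hib⟩ | ⟨hia, hib⟩)
    · have := hw i n hile hn.le hia
      omega
    · have := hw i (n + 1) hile h1 hia
      omega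
  have hnr : ¬ (Ω.graph.deleteEdges {e}).Reachable (w.vtx 0) v := fun r =>
    hbr (hbk.symm.trans (r.trans hvfront.symm))
  have hmem : e ∈ p.edges := by
    by_contra hne
    exact hnr ⟨p.toDeleteEdges {e} fun f hf hf' => hne (Set.mem_singleton_iff.mp hf' ▸ hf)⟩
  have hsup : w.vtx (n + 1) ∈ p.support := SimpleGraph.Walk.snd_mem_support_of_mem_edges p hmem
  have heq : p.takeUntil _ hsup = w.prefixWalk hw (n + 1) h1 :=
    (hT.existsUnique_path (w.vtx 0) (w.vtx (n + 1))).unique (hpp.takeUntil hsup)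
      (w.prefixWalk_isPath hw (n + 1) h1)
  have hlen : n + 1 ≤ p.length := by
    calc n + 1 = (w.prefixWalk hw (n + 1) h1).length := (w.prefixWalk_length hw (n + 1) h1).symm
      _ = (p.takeUntil _ hsup).length := by rw [heq]
      _ ≤ p.length := SimpleGraph.Walk.length_takeUntil_le p hsup
  exact Set.mem_Iio.mpr (Nat.lt_of_lt_of_le (Nat.lt_succ_self n) hlen)

end Qvr

/-- If `α` is a nonempty connected full subquiver of an eventually outward
finitely branched tree quiver `Ω`, then there are only finitely many arrows of `Ω` that
point towards `α`. -/
theorem stmt2 (Ω : Qvr) (hS : Ω.Simple) (hT : Ω.graph.IsTree)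
    (hEO : Ω.EventuallyOutward) (hFB : Ω.FinitelyBranched)
    (α : Set Ω.V) (hconn : Ω.ConnSub α) (hne : α.Nonempty) :
    {e : Ω.A | Ω.PointsToward e α}.Finite := by
  obtain ⟨v, hv⟩ := hne
  have hsub : {e : Ω.A | Ω.PointsToward e α} ⊆ {e : Ω.A | Ω.InFront e v} :=
    fun e he => he v hv
  refine Set.Finite.subset ?_ hsub
  obtain ⟨k, J, hInj, hV, hA⟩ := hFB
  have hcov : {e : Ω.A | Ω.InFront e v} ⊆
      ⋃ m : Fin k, (J m).arr '' {n : ℕ | (n : ℕ∞) < (J m).len ∧ Ω.InFront ((J m).arr n) v} := by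
    intro e he
    obtain ⟨m, n, hn, rfl⟩ := hA e
    exact Set.mem_iUnion.mpr ⟨m, n, ⟨hn, he⟩, rfl⟩
  refine Set.Finite.subset (Set.finite_iUnion fun m => ?_) hcov
  apply Set.Finite.image
  have h1 := hEO (J m) (hInj m)
  have h2 := Qvr.journey_finite_front hT v (J m) (hInj m)
  refine Set.Finite.subset (h1.union h2) ?_
  rintro n ⟨hn, hv'⟩
  by_cases hi : (J m).Inconsistent n
  · exact Or.inl ⟨hn, hi⟩
  · exact Or.inr ⟨hn, hi, hv'⟩
end

section
/- Let Ω be an eventually outward finitely branched tree quiver, 𝒞 its poset of connected full subquivers ordered by the reduction/enhancement order, and V a representation of Ω over a field 𝔽. Then the map F : 𝒞 → Sub(V), α ↦ F^α, is a poset filtration: if β ≤ α in 𝒞 then F^β ⊆ F^α. -/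
attribute [local instance] Classical.propDecidable

/-- A representation of the quiver `Ω` over the field `𝔽`: a vector space at each vertex
and a linear map along each arrow. -/
structure QRep (Ω : Qvr) (𝔽 : Type) [Field 𝔽] where
  Vtx : Ω.V → Type
  acg : ∀ i, AddCommGroup (Vtx i)
  mod : ∀ i, Module 𝔽 (Vtx i)
  f : ∀ a : Ω.A, Vtx (Ω.s a) →ₗ[𝔽] Vtx (Ω.t a)

attribute [instance] QRep.acg QRep.mod

namespace QRep

variable {Ω : Qvr} {𝔽 : Type} [Field 𝔽] (V : QRep Ω 𝔽)

/-- Transport of a subspace along an equality of vertices. -/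
def mcast {i j : Ω.V} (h : i = j) (W : Submodule 𝔽 (V.Vtx i)) : Submodule 𝔽 (V.Vtx j) :=
  h ▸ W

/-- One step of transport, across the unique arrow joining two adjacent vertices:
the image if the arrow is crossed from source to target, the preimage otherwise. -/
noncomputable def stepT {i j : Ω.V} (h : Ω.graph.Adj i j)
    (W : Submodule 𝔽 (V.Vtx i)) : Submodule 𝔽 (V.Vtx j) :=
  let a := Classical.choose h.2
  if hc : Ω.s a = i ∧ Ω.t a = j then
    V.mcast hc.2 ((V.mcast hc.1.symm W).map (V.f a))
  else if hc' : Ω.s a = j ∧ Ω.t a = i then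
    V.mcast hc'.1 ((V.mcast hc'.2.symm W).comap (V.f a))
  else ⊥

/-- Transport of a subspace along a walk in the underlying graph. -/
noncomputable def transpW : {i j : Ω.V} → Ω.graph.Walk i j →
    Submodule 𝔽 (V.Vtx i) → Submodule 𝔽 (V.Vtx j)
  | _, _, SimpleGraph.Walk.nil, W => W
  | _, _, SimpleGraph.Walk.cons h p, W => transpW p (stepT V h W)

/-- The unique injective walk between two vertices of a tree. -/
noncomputable def _root_.Qvr.treeWalk {Ω : Qvr} (hT : Ω.graph.IsTree) (i j : Ω.V) :
    Ω.graph.Walk i j :=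
  (hT.existsUnique_path i j).choose

/-- The transport of the subspace `W ⊆ V j` to the vertex `i`, along the unique injective
walk from `j` to `i`. -/
noncomputable def transportTo (hT : Ω.graph.IsTree) (j : Ω.V)
    (W : Submodule 𝔽 (V.Vtx j)) (i : Ω.V) : Submodule 𝔽 (V.Vtx i) :=
  V.transpW (Qvr.treeWalk hT j i) W

/-- The subrepresentation `V^{e,+}`: everything at the vertices behind `e`, and the
transport of `V (t e)` elsewhere. -/
noncomputable def Vplus (hT : Ω.graph.IsTree) (e : Ω.A) (i : Ω.V) :
    Submodule 𝔽 (V.Vtx i) :=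
  if Ω.Behind e i then ⊤ else V.transportTo hT (Ω.t e) ⊤ i

/-- The subrepresentation `V^{e,-}`: zero at the vertices in front of `e`, and the
transport of `{0} ⊆ V (t e)` elsewhere. -/
noncomputable def Vminus (hT : Ω.graph.IsTree) (e : Ω.A) (i : Ω.V) :
    Submodule 𝔽 (V.Vtx i) :=
  if Ω.InFront e i then ⊥ else V.transportTo hT (Ω.t e) ⊥ i

end QRep

namespace Qvr

variable (Ω : Qvr)

/-- A vertex is a leaf if at most one arrow is incident to it. -/
def IsLeaf (v : Ω.V) : Prop :=
  ∀ a b : Ω.A, (Ω.s a = v ∨ Ω.t a = v) → (Ω.s b = v ∨ Ω.t b = v) → a = b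

/-- A virtual arrow: an oriented injective journey, all of whose arrows are oriented away
from its source, which is either infinite or ends in a leaf. -/
structure VirtArrow (Ω : Qvr) where
  toJourney : Journey Ω
  inj : toJourney.Inj
  consistent : ∀ n : ℕ, (n : ℕ∞) < toJourney.len →
    Ω.s (toJourney.arr n) = toJourney.vtx n ∧ Ω.t (toJourney.arr n) = toJourney.vtx (n + 1)
  endCond : toJourney.len = ⊤ ∨
    ∃ n : ℕ, (n : ℕ∞) = toJourney.len ∧ Ω.IsLeaf (toJourney.vtx n)

/-- The vertex `i` lies on the virtual arrow `E`. -/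
def VirtArrow.mem {Ω : Qvr} (E : VirtArrow Ω) (i : Ω.V) : Prop :=
  ∃ n : ℕ, (n : ℕ∞) ≤ E.toJourney.len ∧ E.toJourney.vtx n = i

/-- `E'` is a tail of the virtual arrow `E`: it traverses the same vertices and arrows
starting `d` steps later. -/
def VirtArrow.IsTail {Ω : Qvr} (E' E : VirtArrow Ω) : Prop :=
  ∃ d : ℕ, (∀ n : ℕ, (n : ℕ∞) ≤ E'.toJourney.len →
      E'.toJourney.vtx n = E.toJourney.vtx (n + d)) ∧
    (∀ n : ℕ, (n : ℕ∞) < E'.toJourney.len → E'.toJourney.arr n = E.toJourney.arr (n + d)) ∧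
    E'.toJourney.len + (d : ℕ∞) = E.toJourney.len

/-- Two virtual arrows are equivalent (represent the same "virtual boundary") if they share
a common tail; equivalent virtual arrows are counted as a single virtual arrow. -/
def VirtArrow.Equiv {Ω : Qvr} (E E' : VirtArrow Ω) : Prop :=
  ∃ E'' : VirtArrow Ω, E''.IsTail E ∧ E''.IsTail E'

/-- Boundary arrows of the full subquiver on `S` pointing towards it. -/
def InBdry (S : Set Ω.V) : Set Ω.A := {e | Ω.t e ∈ S ∧ Ω.s e ∉ S}

/-- Boundary arrows of the full subquiver on `S` pointing away from it. -/
def OutBdry (S : Set Ω.V) : Set Ω.A := {e | Ω.s e ∈ S ∧ Ω.t e ∉ S}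

/-- Virtual boundary arrows of the full subquiver on `S`: virtual arrows lying entirely
within `S`. -/
def VirtBdry (S : Set Ω.V) : Set (VirtArrow Ω) := {E | ∀ i, E.mem i → i ∈ S}

end Qvr

namespace QRep

variable {Ω : Qvr} {𝔽 : Type} [Field 𝔽] (V : QRep Ω 𝔽)

/-- The subrepresentation `V^{E,+}` attached to a virtual arrow `E`: everything at the
vertices of `E`, and the transport of `V j` elsewhere, where `j` is the closest vertex
of `E` (the unique vertex of `E` such that the injective walk from it contains no other
vertex of `E`). -/
noncomputable def VEplus (hT : Ω.graph.IsTree) (E : Qvr.VirtArrow Ω) (i : Ω.V) :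
    Submodule 𝔽 (V.Vtx i) :=
  if E.mem i then ⊤
  else
    ⨆ j : Ω.V, ⨆ (_ : E.mem j ∧
      ∀ k ∈ (Qvr.treeWalk hT j i).support, E.mem k → k = j),
      V.transportTo hT j ⊤ i

/-- The subrepresentation `F^α` attached to a (connected full) subquiver with vertex set
`S`: the intersection of `V^{e,+}` over the boundary arrows `e` pointing towards it, of
`V^{e,-}` over the boundary arrows pointing away from it, and of `V^{E,+}` over its virtual
boundary arrows. -/
noncomputable def Fsub (hT : Ω.graph.IsTree) (S : Set Ω.V) (i : Ω.V) :
    Submodule 𝔽 (V.Vtx i) :=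
  (⨅ e ∈ Ω.InBdry S, V.Vplus hT e i) ⊓ (⨅ e ∈ Ω.OutBdry S, V.Vminus hT e i) ⊓
    ⨅ E ∈ Ω.VirtBdry S, V.VEplus hT E i

/-- The sum `Σ_{β < α} F^β` of the subrepresentations attached to the connected full
subquivers strictly below `α`. -/
noncomputable def sumLt (hT : Ω.graph.IsTree) (α : Ω.CC) (i : Ω.V) :
    Submodule 𝔽 (V.Vtx i) :=
  ⨆ β : Ω.CC, ⨆ (_ : Ω.GtC α β), V.Fsub hT β.1 i

end QRep

namespace StmtAux

open SimpleGraph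

variable {Ω : Qvr}

lemma arrow_adj (hS : Ω.Simple) (a : Ω.A) : Ω.graph.Adj (Ω.s a) (Ω.t a) :=
  ⟨hS.1 a, a, Or.inl ⟨rfl, rfl⟩⟩

lemma arrow_eq_of_pair (hS : Ω.Simple) {b c : Ω.A} {x y : Ω.V}
    (hb : (Ω.s b = x ∧ Ω.t b = y) ∨ (Ω.s b = y ∧ Ω.t b = x))
    (hc : (Ω.s c = x ∧ Ω.t c = y) ∨ (Ω.s c = y ∧ Ω.t c = x)) : b = c := by
  apply hS.2
  rcases hb with ⟨h1, h2⟩ | ⟨h1, h2⟩ <;> rcases hc with ⟨h3, h4⟩ | ⟨h3, h4⟩ <;>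
    rw [h1, h2, h3, h4] <;> exact Set.pair_comm _ _

lemma not_reach_del (hS : Ω.Simple) (hT : Ω.graph.IsTree) (a : Ω.A) :
    ¬ (Ω.graph.deleteEdges {s(Ω.s a, Ω.t a)}).Reachable (Ω.s a) (Ω.t a) := by
  have hb := (SimpleGraph.isAcyclic_iff_forall_adj_isBridge.mp hT.IsAcyclic) (arrow_adj hS a)
  rw [SimpleGraph.isBridge_iff] at hb
  exact hb

lemma not_behind_infront (hS : Ω.Simple) (hT : Ω.graph.IsTree) (a : Ω.A) (i : Ω.V) :
    ¬(Ω.Behind a i ∧ Ω.InFront a i) := by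
  rintro ⟨h1, h2⟩
  exact not_reach_del hS hT a (h1.trans h2.symm)

lemma side_step (a : Ω.A) {x y : Ω.V} (hxy : Ω.graph.Adj x y)
    (hx : Ω.Behind a x ∨ Ω.InFront a x) : Ω.Behind a y ∨ Ω.InFront a y := by
  by_cases hc : s(x, y) = s(Ω.s a, Ω.t a)
  · rcases Sym2.eq_iff.mp hc with ⟨h1, h2⟩ | ⟨h1, h2⟩
    · exact Or.inr (h2 ▸ Reachable.refl _)
    · exact Or.inl (h2 ▸ Reachable.refl _)
  · have hadj : (Ω.graph.deleteEdges {s(Ω.s a, Ω.t a)}).Adj x y :=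
      SimpleGraph.deleteEdges_adj.mpr ⟨hxy, by simpa using hc⟩
    rcases hx with h | h
    · exact Or.inl (h.trans hadj.reachable)
    · exact Or.inr (h.trans hadj.reachable)

lemma side_walk (a : Ω.A) : ∀ {x i : Ω.V} (_ : Ω.graph.Walk x i),
    Ω.Behind a x ∨ Ω.InFront a x → Ω.Behind a i ∨ Ω.InFront a i
  | _, _, SimpleGraph.Walk.nil, hx => hx
  | _, _, SimpleGraph.Walk.cons h p, hx => side_walk a p (side_step a h hx)

lemma behind_or_infront (hT : Ω.graph.IsTree) (a : Ω.A) (i : Ω.V) :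
    Ω.Behind a i ∨ Ω.InFront a i := by
  obtain ⟨w⟩ := hT.isConnected.preconnected (Ω.s a) i
  exact side_walk a w (Or.inl (Reachable.refl _))

lemma cross_edge (hS : Ω.Simple) (hT : Ω.graph.IsTree) (a : Ω.A) {x y : Ω.V}
    (hxy : Ω.graph.Adj x y) (hx : Ω.Behind a x) (hy : Ω.InFront a y) :
    s(x, y) = s(Ω.s a, Ω.t a) := by
  by_contra hc
  have hadj : (Ω.graph.deleteEdges {s(Ω.s a, Ω.t a)}).Adj x y :=
    SimpleGraph.deleteEdges_adj.mpr ⟨hxy, by simpa using hc⟩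
  exact not_behind_infront hS hT a y ⟨hx.trans hadj.reachable, hy⟩

lemma arrow_eq_of_straddle (hS : Ω.Simple) (hT : Ω.graph.IsTree) {g a : Ω.A}
    (h1 : Ω.Behind a (Ω.s g)) (h2 : Ω.InFront a (Ω.t g)) : g = a := by
  have hedge := cross_edge hS hT a (arrow_adj hS g) h1 h2
  refine arrow_eq_of_pair hS (x := Ω.s a) (y := Ω.t a) ?_ (Or.inl ⟨rfl, rfl⟩)
  rcases Sym2.eq_iff.mp hedge with ⟨h3, h4⟩ | ⟨h3, h4⟩
  · exact Or.inl ⟨h3, h4⟩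
  · exact Or.inr ⟨h3, h4⟩

lemma arrow_eq_of_straddle' (hS : Ω.Simple) (hT : Ω.graph.IsTree) {g a : Ω.A}
    (h1 : Ω.Behind a (Ω.t g)) (h2 : Ω.InFront a (Ω.s g)) : g = a := by
  have hedge := cross_edge hS hT a ((arrow_adj hS g).symm) h1 h2
  refine arrow_eq_of_pair hS (x := Ω.s a) (y := Ω.t a) ?_ (Or.inl ⟨rfl, rfl⟩)
  rcases Sym2.eq_iff.mp hedge with ⟨h3, h4⟩ | ⟨h3, h4⟩
  · exact Or.inr ⟨h4, h3⟩
  · exact Or.inl ⟨h4, h3⟩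

lemma mem_edges_of_cross (hS : Ω.Simple) (hT : Ω.graph.IsTree) (a : Ω.A) {u x : Ω.V}
    (w : Ω.graph.Walk u x) (hu : Ω.InFront a u) (hx : Ω.Behind a x) :
    s(Ω.s a, Ω.t a) ∈ w.edges := by
  by_contra hc
  have w' := w.toDeleteEdges {s(Ω.s a, Ω.t a)}
    (fun e he hmem => hc (Set.mem_singleton_iff.mp hmem ▸ he))
  exact not_behind_infront hS hT a x ⟨hx, hu.trans w'.reachable⟩

lemma mem_edges_of_cross' (hS : Ω.Simple) (hT : Ω.graph.IsTree) (a : Ω.A) {u x : Ω.V}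
    (w : Ω.graph.Walk u x) (hu : Ω.Behind a u) (hx : Ω.InFront a x) :
    s(Ω.s a, Ω.t a) ∈ w.edges := by
  have := mem_edges_of_cross hS hT a w.reverse hx hu
  rwa [SimpleGraph.Walk.edges_reverse, List.mem_reverse] at this

lemma exists_walk_in {S : Set Ω.V} (hconn : Ω.ConnSub S) {x y : Ω.V}
    (hx : x ∈ S) (hy : y ∈ S) :
    ∃ w : Ω.graph.Walk x y, ∀ z ∈ w.support, z ∈ S := by
  obtain ⟨w⟩ := hconn x hx y hy
  refine ⟨w.map ⟨Subtype.val, fun hab => hab⟩, ?_⟩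
  intro z hz
  rw [SimpleGraph.Walk.support_map] at hz
  obtain ⟨z', _, rfl⟩ := List.mem_map.mp hz
  exact z'.2

lemma reach_del_of_avoid_s (a : Ω.A) {u x : Ω.V} (w : Ω.graph.Walk u x)
    (hw : Ω.s a ∉ w.support) :
    (Ω.graph.deleteEdges {s(Ω.s a, Ω.t a)}).Reachable u x := by
  refine (w.toDeleteEdges _ ?_).reachable
  intro e he hmem
  exact hw (w.fst_mem_support_of_mem_edges (Set.mem_singleton_iff.mp hmem ▸ he))

lemma reach_del_of_avoid_t (a : Ω.A) {u x : Ω.V} (w : Ω.graph.Walk u x)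
    (hw : Ω.t a ∉ w.support) :
    (Ω.graph.deleteEdges {s(Ω.s a, Ω.t a)}).Reachable u x := by
  refine (w.toDeleteEdges _ ?_).reachable
  intro e he hmem
  exact hw (w.snd_mem_support_of_mem_edges (Set.mem_singleton_iff.mp hmem ▸ he))

lemma treeWalk_isPath (hT : Ω.graph.IsTree) (j i : Ω.V) :
    (Qvr.treeWalk hT j i).IsPath := (hT.existsUnique_path j i).choose_spec.1

lemma treeWalk_unique (hT : Ω.graph.IsTree) {j i : Ω.V} (p : Ω.graph.Walk j i)
    (hp : p.IsPath) : p = Qvr.treeWalk hT j i :=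
  (hT.existsUnique_path j i).choose_spec.2 p hp

lemma treeWalk_split (hT : Ω.graph.IsTree) {j i m : Ω.V}
    (hm : m ∈ (Qvr.treeWalk hT j i).support) :
    Qvr.treeWalk hT j i = (Qvr.treeWalk hT j m).append (Qvr.treeWalk hT m i) := by
  have hp := treeWalk_isPath hT j i
  have h1 : (Qvr.treeWalk hT j i).takeUntil m hm = Qvr.treeWalk hT j m :=
    treeWalk_unique hT _ (hp.takeUntil hm)
  have h2 : (Qvr.treeWalk hT j i).dropUntil m hm = Qvr.treeWalk hT m i :=
    treeWalk_unique hT _ (hp.dropUntil hm)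
  rw [← h1, ← h2, SimpleGraph.Walk.take_spec]

end StmtAux
namespace StmtAux

open SimpleGraph

variable {Ω : Qvr} {𝔽 : Type} [Field 𝔽] (V : QRep Ω 𝔽)

lemma mcast_mono {i j : Ω.V} (h : i = j) {W W' : Submodule 𝔽 (V.Vtx i)} (hW : W ≤ W') :
    V.mcast h W ≤ V.mcast h W' := by
  subst h; simpa [QRep.mcast] using hW

lemma stepT_def {i j : Ω.V} (h : Ω.graph.Adj i j) (W : Submodule 𝔽 (V.Vtx i)) :
    V.stepT h W =
      if hc : Ω.s (Classical.choose h.2) = i ∧ Ω.t (Classical.choose h.2) = j then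
        V.mcast hc.2 ((V.mcast hc.1.symm W).map (V.f (Classical.choose h.2)))
      else if hc' : Ω.s (Classical.choose h.2) = j ∧ Ω.t (Classical.choose h.2) = i then
        V.mcast hc'.1 ((V.mcast hc'.2.symm W).comap (V.f (Classical.choose h.2)))
      else ⊥ := rfl

lemma stepT_mono {i j : Ω.V} (h : Ω.graph.Adj i j) {W W' : Submodule 𝔽 (V.Vtx i)}
    (hW : W ≤ W') : V.stepT h W ≤ V.stepT h W' := by
  rw [stepT_def, stepT_def]
  by_cases hc : Ω.s (Classical.choose h.2) = i ∧ Ω.t (Classical.choose h.2) = j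
  · rw [dif_pos hc, dif_pos hc]
    exact mcast_mono V _ (Submodule.map_mono (mcast_mono V _ hW))
  · rw [dif_neg hc, dif_neg hc]
    by_cases hc' : Ω.s (Classical.choose h.2) = j ∧ Ω.t (Classical.choose h.2) = i
    · rw [dif_pos hc', dif_pos hc']
      exact mcast_mono V _ (Submodule.comap_mono (mcast_mono V _ hW))
    · rw [dif_neg hc', dif_neg hc']

lemma transpW_mono : ∀ {i j : Ω.V} (p : Ω.graph.Walk i j) {W W' : Submodule 𝔽 (V.Vtx i)},
    W ≤ W' → V.transpW p W ≤ V.transpW p W'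
  | _, _, SimpleGraph.Walk.nil, _, _, h => h
  | _, _, SimpleGraph.Walk.cons hadj p, _, _, h => transpW_mono p (stepT_mono V hadj h)

lemma transpW_append : ∀ {i m j : Ω.V} (p : Ω.graph.Walk i m) (q : Ω.graph.Walk m j)
    (W : Submodule 𝔽 (V.Vtx i)), V.transpW (p.append q) W = V.transpW q (V.transpW p W)
  | _, _, _, SimpleGraph.Walk.nil, _, _ => rfl
  | _, _, _, SimpleGraph.Walk.cons h p, q, W => transpW_append p q (V.stepT h W)

lemma transportTo_bot_le (hT : Ω.graph.IsTree) {m j i : Ω.V}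
    (hm : m ∈ (Qvr.treeWalk hT j i).support) (W : Submodule 𝔽 (V.Vtx j)) :
    V.transportTo hT m ⊥ i ≤ V.transportTo hT j W i := by
  unfold QRep.transportTo
  rw [treeWalk_split hT hm, transpW_append]
  exact transpW_mono V _ bot_le

lemma transportTo_le_top (hT : Ω.graph.IsTree) {m j i : Ω.V}
    (hm : m ∈ (Qvr.treeWalk hT j i).support) (W : Submodule 𝔽 (V.Vtx j)) :
    V.transportTo hT j W i ≤ V.transportTo hT m ⊤ i := by
  unfold QRep.transportTo
  rw [treeWalk_split hT hm, transpW_append]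
  exact transpW_mono V _ le_top

lemma Fsub_le_in (hT : Ω.graph.IsTree) {S : Set Ω.V} {f : Ω.A} (hf : f ∈ Ω.InBdry S)
    (i : Ω.V) : V.Fsub hT S i ≤ V.Vplus hT f i :=
  le_trans (le_trans inf_le_left inf_le_left) (iInf₂_le f hf)

lemma Fsub_le_out (hT : Ω.graph.IsTree) {S : Set Ω.V} {f : Ω.A} (hf : f ∈ Ω.OutBdry S)
    (i : Ω.V) : V.Fsub hT S i ≤ V.Vminus hT f i :=
  le_trans (le_trans inf_le_left inf_le_right) (iInf₂_le f hf)

lemma Fsub_le_virt (hT : Ω.graph.IsTree) {S : Set Ω.V} {E : Qvr.VirtArrow Ω}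
    (hE : E ∈ Ω.VirtBdry S) (i : Ω.V) : V.Fsub hT S i ≤ V.VEplus hT E i :=
  le_trans inf_le_right (iInf₂_le E hE)

lemma le_Fsub (hT : Ω.graph.IsTree) {S : Set Ω.V} {i : Ω.V} {X : Submodule 𝔽 (V.Vtx i)}
    (h1 : ∀ f ∈ Ω.InBdry S, X ≤ V.Vplus hT f i)
    (h2 : ∀ f ∈ Ω.OutBdry S, X ≤ V.Vminus hT f i)
    (h3 : ∀ E ∈ Ω.VirtBdry S, X ≤ V.VEplus hT E i) : X ≤ V.Fsub hT S i :=
  le_inf (le_inf (le_iInf₂ h1) (le_iInf₂ h2)) (le_iInf₂ h3)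

end StmtAux
namespace StmtAux

open SimpleGraph

variable {Ω : Qvr}

lemma enat_succ_le {n : ℕ} {L : ℕ∞} (h : (n : ℕ∞) < L) : ((n + 1 : ℕ) : ℕ∞) ≤ L := by
  push_cast
  exact (ENat.add_one_le_iff (ENat.coe_ne_top n)).mpr h

lemma journey_adj (hS : Ω.Simple) (J : Qvr.Journey Ω) (hInj : J.Inj) {n : ℕ}
    (hn : (n : ℕ∞) < J.len) : Ω.graph.Adj (J.vtx n) (J.vtx (n + 1)) := by
  refine ⟨fun h => ?_, J.arr n, J.compat n hn⟩
  have := hInj n (n + 1) hn.le (enat_succ_le hn) h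
  omega

/-- A walk along a journey from index `a` to index `a + k`. -/
noncomputable def segWalk (hS : Ω.Simple) (J : Qvr.Journey Ω) (hInj : J.Inj) :
    ∀ (a k : ℕ), (((a + k : ℕ) : ℕ∞) ≤ J.len) → Ω.graph.Walk (J.vtx a) (J.vtx (a + k))
  | _, 0, _ => SimpleGraph.Walk.nil
  | a, k + 1, h =>
    (segWalk hS J hInj a k (le_trans (Nat.cast_le.mpr (by omega)) h)).concat
      (journey_adj hS J hInj (lt_of_lt_of_le (by exact_mod_cast Nat.lt_succ_self (a + k)) h))

lemma segWalk_support (hS : Ω.Simple) (J : Qvr.Journey Ω) (hInj : J.Inj) :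
    ∀ (a k : ℕ) (h : ((a + k : ℕ) : ℕ∞) ≤ J.len) (z : Ω.V),
      z ∈ (segWalk hS J hInj a k h).support → ∃ m, a ≤ m ∧ m ≤ a + k ∧ J.vtx m = z
  | a, 0, h, z => by
    intro hz
    simp only [segWalk, SimpleGraph.Walk.support_nil, List.mem_singleton] at hz
    exact ⟨a, le_refl a, by omega, hz.symm⟩
  | a, k + 1, h, z => by
    intro hz
    simp only [segWalk, SimpleGraph.Walk.support_concat] at hz
    rw [List.mem_append, List.mem_singleton] at hz
    rcases hz with hz' | hz'
    · obtain ⟨m, h1, h2, h3⟩ := segWalk_support hS J hInj a k _ z hz'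
      exact ⟨m, h1, by omega, h3⟩
    · exact ⟨a + (k + 1), by omega, le_refl _, hz'.symm⟩

/-- A walk in the graph between two vertices of a virtual arrow, whose support stays on
the virtual arrow. -/
lemma walkBetween (hS : Ω.Simple) (E : Qvr.VirtArrow Ω) {y z : Ω.V}
    (hy : E.mem y) (hz : E.mem z) :
    ∃ w : Ω.graph.Walk y z, ∀ v ∈ w.support, E.mem v := by
  obtain ⟨m, hm, rfl⟩ := hy
  obtain ⟨n, hn, rfl⟩ := hz
  rcases le_total m n with hmn | hmn
  · have hkey : m + (n - m) = n := by omega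
    have hlen : ((m + (n - m) : ℕ) : ℕ∞) ≤ E.toJourney.len := by rw [hkey]; exact hn
    refine ⟨(segWalk hS E.toJourney E.inj m (n - m) hlen).copy rfl (by rw [hkey]), ?_⟩
    intro v hv
    rw [SimpleGraph.Walk.support_copy] at hv
    obtain ⟨j, h1, h2, h3⟩ := segWalk_support hS E.toJourney E.inj m (n - m) hlen v hv
    exact ⟨j, le_trans (Nat.cast_le.mpr (by omega)) hn, h3⟩
  · have hkey : n + (m - n) = m := by omega
    have hlen : ((n + (m - n) : ℕ) : ℕ∞) ≤ E.toJourney.len := by rw [hkey]; exact hm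
    refine ⟨((segWalk hS E.toJourney E.inj n (m - n) hlen).copy rfl (by rw [hkey])).reverse, ?_⟩
    intro v hv
    rw [SimpleGraph.Walk.support_reverse, List.mem_reverse, SimpleGraph.Walk.support_copy] at hv
    obtain ⟨j, h1, h2, h3⟩ := segWalk_support hS E.toJourney E.inj n (m - n) hlen v hv
    exact ⟨j, le_trans (Nat.cast_le.mpr (by omega)) hm, h3⟩

lemma virt_cross (hS : Ω.Simple) (hT : Ω.graph.IsTree) (E : Qvr.VirtArrow Ω) (a : Ω.A)
    {j x : Ω.V} (hj : E.mem j) (hx : E.mem x) (hbj : Ω.Behind a j) (hfx : Ω.InFront a x) :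
    E.mem (Ω.s a) ∧ E.mem (Ω.t a) := by
  obtain ⟨w, hw⟩ := walkBetween hS E hj hx
  have hedge := mem_edges_of_cross' hS hT a w hbj hfx
  exact ⟨hw _ (w.fst_mem_support_of_mem_edges hedge),
    hw _ (w.snd_mem_support_of_mem_edges hedge)⟩

lemma gate_exists (hT : Ω.graph.IsTree) (E : Qvr.VirtArrow Ω) (i : Ω.V) :
    ∃ j, E.mem j ∧ ∀ k ∈ (Qvr.treeWalk hT j i).support, E.mem k → k = j := by
  classical
  have hne : ∃ n, ∃ k, E.mem k ∧ (Qvr.treeWalk hT k i).length = n :=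
    ⟨_, E.toJourney.vtx 0, ⟨0, by simp, rfl⟩, rfl⟩
  obtain ⟨j, hj, hjlen⟩ := Nat.find_spec hne
  refine ⟨j, hj, fun k hk hkE => ?_⟩
  by_contra hne'
  have hsplit := treeWalk_split hT hk
  have hlen : (Qvr.treeWalk hT j i).length =
      (Qvr.treeWalk hT j k).length + (Qvr.treeWalk hT k i).length := by
    rw [hsplit, SimpleGraph.Walk.length_append]
  have hpos : 0 < (Qvr.treeWalk hT j k).length := by
    rcases Nat.eq_zero_or_pos (Qvr.treeWalk hT j k).length with h0 | h
    · exact absurd (SimpleGraph.Walk.eq_of_length_eq_zero h0).symm hne'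
    · exact h
  exact Nat.find_min hne (m := (Qvr.treeWalk hT k i).length) (by omega) ⟨k, hkE, rfl⟩

lemma gate_mem_support (hS : Ω.Simple) (hT : Ω.graph.IsTree) (E : Qvr.VirtArrow Ω)
    {i j k : Ω.V} (hj : E.mem j)
    (hgate : ∀ k ∈ (Qvr.treeWalk hT j i).support, E.mem k → k = j)
    (hk : E.mem k) : j ∈ (Qvr.treeWalk hT k i).support := by
  obtain ⟨w, hw⟩ := walkBetween hS E hk hj
  have hsupp1 : ∀ z ∈ (Qvr.treeWalk hT k j).support, E.mem z := by
    intro z hz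
    rw [← treeWalk_unique hT w.bypass w.bypass_isPath] at hz
    exact hw z (w.support_bypass_subset hz)
  have hpath : ((Qvr.treeWalk hT k j).append (Qvr.treeWalk hT j i)).IsPath := by
    rw [SimpleGraph.Walk.isPath_def, SimpleGraph.Walk.support_append]
    refine List.Nodup.append ((treeWalk_isPath hT k j).support_nodup)
      (((treeWalk_isPath hT j i).support_nodup).sublist (List.tail_sublist _)) ?_
    intro z hz1 hz2
    have hz2' : z ∈ (Qvr.treeWalk hT j i).support := List.mem_of_mem_tail hz2
    have hzj : z = j := hgate z hz2' (hsupp1 z hz1)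
    subst hzj
    have := (treeWalk_isPath hT z i).support_nodup
    rw [(Qvr.treeWalk hT z i).support_eq_cons] at this
    exact (List.nodup_cons.mp this).1 hz2
  rw [← treeWalk_unique hT _ hpath]
  rw [SimpleGraph.Walk.mem_support_append_iff]
  exact Or.inl ((Qvr.treeWalk hT k j).end_mem_support)

/-- The singleton virtual arrow at a leaf. -/
noncomputable def virtSingle (v : Ω.V) (hv : Ω.IsLeaf v) (a0 : Ω.A) : Qvr.VirtArrow Ω where
  toJourney :=
    { len := 0
      vtx := fun _ => v
      arr := fun _ => a0
      compat := fun n hn => absurd hn (by simp) }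
  inj := by
    intro m n hm hn _
    have hm0 : (m : ℕ∞) ≤ ((0 : ℕ) : ℕ∞) := hm
    have hn0 : (n : ℕ∞) ≤ ((0 : ℕ) : ℕ∞) := hn
    have h1 : m ≤ 0 := by exact_mod_cast hm0
    have h2 : n ≤ 0 := by exact_mod_cast hn0
    omega
  consistent := fun n hn => absurd hn (by simp)
  endCond := Or.inr ⟨0, by simp, hv⟩

lemma virtSingle_mem {v : Ω.V} {hv : Ω.IsLeaf v} {a0 : Ω.A} {x : Ω.V}
    (h : (virtSingle v hv a0).mem x) : x = v := by
  obtain ⟨n, _, h⟩ := h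
  exact h.symm

lemma virtSingle_mem_self {v : Ω.V} {hv : Ω.IsLeaf v} {a0 : Ω.A} :
    (virtSingle v hv a0).mem v := ⟨0, by simp, rfl⟩

end StmtAux
namespace StmtAux

open SimpleGraph

variable {Ω : Qvr}

lemma no_back (hT : Ω.graph.IsTree) {u x y z : Ω.V} {P : Ω.graph.Walk u x}
    (hy : y ∉ P.support) (hz : z ∈ P.support) (hzx : z ≠ x)
    (hadjxy : Ω.graph.Adj x y) (hadjyz : Ω.graph.Adj y z) : False := by
  have hbr := SimpleGraph.isAcyclic_iff_forall_adj_isBridge.mp hT.IsAcyclic hadjyz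
  rw [SimpleGraph.isBridge_iff] at hbr
  refine hbr ?_
  set w : Ω.graph.Walk z y :=
    (P.dropUntil z hz).append (SimpleGraph.Walk.cons hadjxy .nil) with hw
  have hedges : s(y, z) ∉ w.edges := by
    rw [hw]
    intro hmem
    rw [SimpleGraph.Walk.edges_append] at hmem
    rcases List.mem_append.mp hmem with hmem | hmem
    · exact hy (P.fst_mem_support_of_mem_edges (P.edges_dropUntil_subset hz hmem))
    · simp only [SimpleGraph.Walk.edges_cons, SimpleGraph.Walk.edges_nil,
        List.mem_singleton] at hmem
      rcases Sym2.eq_iff.mp hmem with ⟨h1, h2⟩ | ⟨h1, h2⟩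
      · exact hy (h2 ▸ hz)
      · exact hzx h2
  exact (w.toDeleteEdges {s(y, z)}
    (fun e' he' hm => hedges (Set.mem_singleton_iff.mp hm ▸ he'))).reachable.symm

/-- The state of the non-backtracking walk construction. -/
structure WState (Ω : Qvr) (T' : Set Ω.V) (e : Ω.A) where
  x : Ω.V
  P : Ω.graph.Walk (Ω.s e) x
  a : Ω.A
  hP : P.IsPath
  hsupp : ∀ z ∈ P.support, z ∈ T'
  honly : ∀ b : Ω.A,
    ((Ω.s b = x ∧ Ω.t b ∈ P.support) ∨ (Ω.t b = x ∧ Ω.s b ∈ P.support)) → b = a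
  hnil : P.length = 0 → a = e

section construction

variable (hS : Ω.Simple) (hT : Ω.graph.IsTree) {T' : Set Ω.V} {e : Ω.A}
  (hse : Ω.s e ∈ T') (hte : Ω.t e ∉ T')
  (hclosed : ∀ g : Ω.A, g ≠ e → (Ω.s g ∈ T' ∨ Ω.t g ∈ T') → (Ω.s g ∈ T' ∧ Ω.t g ∈ T'))
  (hnoleaf : ∀ v ∈ T', ¬ Ω.IsLeaf v)

include hS hT hse hte hclosed hnoleaf

lemma wstep_ex (st : WState Ω T' e) :
    ∃ (b : Ω.A) (y : Ω.V),
      ((Ω.s b = st.x ∧ Ω.t b = y) ∨ (Ω.s b = y ∧ Ω.t b = st.x)) ∧ b ≠ st.a ∧ y ∈ T' ∧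
        y ∉ st.P.support := by
  have hxT : st.x ∈ T' := st.hsupp _ st.P.end_mem_support
  have hnl : ¬ Ω.IsLeaf st.x := hnoleaf _ hxT
  rw [Qvr.IsLeaf] at hnl
  push_neg at hnl
  obtain ⟨c, d, hc, hd, hcd⟩ := hnl
  obtain ⟨b, hbinc, hba⟩ : ∃ b : Ω.A, (Ω.s b = st.x ∨ Ω.t b = st.x) ∧ b ≠ st.a := by
    by_cases h1 : c = st.a
    · exact ⟨d, hd, fun h => hcd (h1.trans h.symm)⟩
    · exact ⟨c, hc, h1⟩
  have hbe : b ≠ e := by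
    intro hbe; subst hbe
    rcases hbinc with h | h
    · have hQ : (st.P.copy rfl h.symm).IsPath := by
        rw [SimpleGraph.Walk.isPath_copy]; exact st.hP
      have hQ0 := SimpleGraph.Walk.isPath_iff_eq_nil.mp hQ
      have hlen : st.P.length = 0 := by
        have := congrArg SimpleGraph.Walk.length hQ0
        rwa [SimpleGraph.Walk.length_copy, SimpleGraph.Walk.length_nil] at this
      exact hba (st.hnil hlen).symm
    · exact hte (h ▸ hxT)
  have hboth := hclosed b hbe
    (by rcases hbinc with h | h
        · exact Or.inl (by rw [h]; exact hxT)
        · exact Or.inr (by rw [h]; exact hxT))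
  rcases hbinc with h | h
  · refine ⟨b, Ω.t b, Or.inl ⟨h, rfl⟩, hba, hboth.2, fun hmem => ?_⟩
    exact hba (st.honly b (Or.inl ⟨h, hmem⟩))
  · refine ⟨b, Ω.s b, Or.inr ⟨rfl, h⟩, hba, hboth.1, fun hmem => ?_⟩
    exact hba (st.honly b (Or.inr ⟨h, hmem⟩))

noncomputable def wstep (st : WState Ω T' e) : WState Ω T' e :=
  let H := wstep_ex hS hT hse hte hclosed hnoleaf st
  let b := H.choose
  let spec1 := H.choose_spec
  let y := spec1.choose
  let hspec := spec1.choose_spec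
  have hy_not : y ∉ st.P.support := hspec.2.2.2
  have hne : st.x ≠ y := fun hxy => hy_not (hxy ▸ st.P.end_mem_support)
  have hadj : Ω.graph.Adj st.x y := ⟨hne, b, hspec.1⟩
  { x := y
    P := st.P.concat hadj
    a := b
    hP := by
      rw [SimpleGraph.Walk.isPath_def, SimpleGraph.Walk.support_concat]
      refine List.Nodup.append st.hP.support_nodup (List.nodup_singleton y) ?_
      intro z hz1 hz2
      rw [List.mem_singleton] at hz2
      exact hy_not (hz2 ▸ hz1)
    hsupp := by
      intro z hz
      rw [SimpleGraph.Walk.support_concat, List.mem_append] at hz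
      rcases hz with hz | hz
      · exact st.hsupp z hz
      · rw [List.mem_singleton] at hz
        exact hz ▸ hspec.2.2.1
    honly := by
      intro c hc
      have hsuppc : (st.P.concat hadj).support = st.P.support ++ [y] := by
        rw [SimpleGraph.Walk.support_concat]
      rcases hc with ⟨h1, h2⟩ | ⟨h1, h2⟩
      · rw [hsuppc, List.mem_append, List.mem_singleton] at h2
        rcases h2 with h2 | h2
        · by_cases hzx : Ω.t c = st.x
          · exact arrow_eq_of_pair hS (x := st.x) (y := y) (Or.inr ⟨h1, hzx⟩) hspec.1
          · exact absurd (no_back hT hy_not h2 hzx hadj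
              ⟨fun hyz => hy_not (hyz ▸ h2), c, Or.inl ⟨h1, rfl⟩⟩) id
        · exact absurd (h1.trans h2.symm) (hS.1 c)
      · rw [hsuppc, List.mem_append, List.mem_singleton] at h2
        rcases h2 with h2 | h2
        · by_cases hzx : Ω.s c = st.x
          · exact arrow_eq_of_pair hS (x := st.x) (y := y) (Or.inl ⟨hzx, h1⟩) hspec.1
          · exact absurd (no_back hT hy_not h2 hzx hadj
              ⟨fun hyz => hy_not (hyz ▸ h2), c, Or.inr ⟨rfl, h1⟩⟩) id
        · exact absurd (h2.trans h1.symm) (hS.1 c)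
    hnil := by
      intro h
      rw [SimpleGraph.Walk.length_concat] at h
      omega }

noncomputable def chain : ℕ → WState Ω T' e
  | 0 =>
    { x := Ω.s e
      P := SimpleGraph.Walk.nil
      a := e
      hP := SimpleGraph.Walk.IsPath.nil
      hsupp := by
        intro z hz
        rw [SimpleGraph.Walk.support_nil, List.mem_singleton] at hz
        exact hz ▸ hse
      honly := by
        intro b hb
        rcases hb with ⟨h1, h2⟩ | ⟨h1, h2⟩ <;>
          rw [SimpleGraph.Walk.support_nil, List.mem_singleton] at h2
        · exact absurd (h1.trans h2.symm) (hS.1 b)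
        · exact absurd (h2.trans h1.symm) (hS.1 b)
      hnil := fun _ => rfl }
  | n + 1 => wstep hS hT hse hte hclosed hnoleaf (chain n)

lemma wstep_spec (st : WState Ω T' e) :
    ((Ω.s (wstep hS hT hse hte hclosed hnoleaf st).a = st.x ∧
        Ω.t (wstep hS hT hse hte hclosed hnoleaf st).a =
          (wstep hS hT hse hte hclosed hnoleaf st).x) ∨
      (Ω.s (wstep hS hT hse hte hclosed hnoleaf st).a =
          (wstep hS hT hse hte hclosed hnoleaf st).x ∧
        Ω.t (wstep hS hT hse hte hclosed hnoleaf st).a = st.x)) ∧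
    (wstep hS hT hse hte hclosed hnoleaf st).x ∉ st.P.support ∧
    (∀ z ∈ st.P.support, z ∈ (wstep hS hT hse hte hclosed hnoleaf st).P.support) := by
  have hspec := (wstep_ex hS hT hse hte hclosed hnoleaf st).choose_spec.choose_spec
  refine ⟨hspec.1, hspec.2.2.2, ?_⟩
  intro z hz
  have key : ∀ {v : Ω.V} (h : Ω.graph.Adj st.x v), z ∈ (st.P.concat h).support := fun h => by
    rw [SimpleGraph.Walk.support_concat, List.mem_append]; exact Or.inl hz
  exact key _

lemma chain_supp_mono {m n : ℕ} (h : m ≤ n) :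
    ∀ z ∈ (chain hS hT hse hte hclosed hnoleaf m).P.support,
      z ∈ (chain hS hT hse hte hclosed hnoleaf n).P.support := by
  induction n with
  | zero =>
    intro z hz
    have hm : m = 0 := by omega
    exact hm ▸ hz
  | succ n ih =>
    intro z hz
    rcases Nat.lt_or_ge m (n + 1) with h' | h'
    · exact (wstep_spec hS hT hse hte hclosed hnoleaf _).2.2 z (ih (by omega) z hz)
    · have hm : m = n + 1 := by omega
      exact hm ▸ hz

lemma chain_x_not_mem (n : ℕ) :
    (chain hS hT hse hte hclosed hnoleaf (n + 1)).x ∉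
      (chain hS hT hse hte hclosed hnoleaf n).P.support :=
  (wstep_spec hS hT hse hte hclosed hnoleaf _).2.1

lemma chain_inj {m n : ℕ} (h : m < n) :
    (chain hS hT hse hte hclosed hnoleaf m).x ≠ (chain hS hT hse hte hclosed hnoleaf n).x := by
  intro heq
  obtain ⟨k, rfl⟩ : ∃ k, n = k + 1 := ⟨n - 1, by omega⟩
  apply chain_x_not_mem hS hT hse hte hclosed hnoleaf k
  rw [← heq]
  exact chain_supp_mono hS hT hse hte hclosed hnoleaf (by omega) _
    ((chain hS hT hse hte hclosed hnoleaf m).P.end_mem_support)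

lemma chain_x_T' (n : ℕ) : (chain hS hT hse hte hclosed hnoleaf n).x ∈ T' :=
  (chain hS hT hse hte hclosed hnoleaf n).hsupp _
    ((chain hS hT hse hte hclosed hnoleaf n).P.end_mem_support)

lemma exists_virt_in (hEO : Ω.EventuallyOutward) :
    ∃ E : Qvr.VirtArrow Ω, ∀ x, E.mem x → x ∈ T' := by
  set C := chain hS hT hse hte hclosed hnoleaf with hC
  let J : Qvr.Journey Ω :=
    { len := ⊤
      vtx := fun n => (C n).x
      arr := fun n => (C (n + 1)).a
      compat := fun n _ => (wstep_spec hS hT hse hte hclosed hnoleaf (C n)).1 }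
  have hJinj : J.Inj := by
    intro m n _ _ h
    by_contra hmn
    rcases Nat.lt_or_ge m n with h' | h'
    · exact chain_inj hS hT hse hte hclosed hnoleaf h' h
    · exact chain_inj hS hT hse hte hclosed hnoleaf (by omega) h.symm
  have hfin := hEO J hJinj
  obtain ⟨n0, hn0⟩ : ∃ n0, ∀ n, n0 ≤ n → ¬ J.Inconsistent n := by
    obtain ⟨ub, hub⟩ := hfin.bddAbove
    refine ⟨ub + 1, fun n hn hbad => ?_⟩
    have hmem : n ∈ {n : ℕ | (n : ℕ∞) < J.len ∧ J.Inconsistent n} :=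
      ⟨by exact_mod_cast WithTop.coe_lt_top n, hbad⟩
    have := hub hmem
    omega
  have hconsist : ∀ n : ℕ, Ω.s (J.arr (n + n0)) = J.vtx (n + n0) ∧
      Ω.t (J.arr (n + n0)) = J.vtx (n + 1 + n0) := by
    intro n
    rw [show n + 1 + n0 = n + n0 + 1 by omega]
    rcases J.compat (n + n0) (by exact_mod_cast WithTop.coe_lt_top (n + n0)) with h | h
    · exact h
    · exact absurd h (hn0 (n + n0) (by omega))
  have hinj2 : ∀ m n : ℕ, ((m : ℕ∞) ≤ (⊤ : ℕ∞)) → ((n : ℕ∞) ≤ (⊤ : ℕ∞)) →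
      J.vtx (m + n0) = J.vtx (n + n0) → m = n := by
    intro m n _ _ h
    have := hJinj (m + n0) (n + n0) le_top le_top h
    omega
  let E : Qvr.VirtArrow Ω :=
    { toJourney :=
        { len := ⊤
          vtx := fun n => J.vtx (n + n0)
          arr := fun n => J.arr (n + n0)
          compat := fun n _ => Or.inl (hconsist n) }
      inj := fun m n hm hn h => hinj2 m n hm hn h
      consistent := fun n _ => hconsist n
      endCond := Or.inl rfl }
  refine ⟨E, ?_⟩
  rintro x ⟨n, _, rfl⟩
  exact chain_x_T' hS hT hse hte hclosed hnoleaf (n + n0)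

end construction

end StmtAux
namespace StmtAux

open SimpleGraph

variable {Ω : Qvr} {𝔽 : Type} [Field 𝔽] (V : QRep Ω 𝔽)

lemma vminus_le_vplus (hS : Ω.Simple) (hT : Ω.graph.IsTree) {e f : Ω.A}
    (hf : Ω.InFront e (Ω.t f)) (i : Ω.V) : V.Vminus hT e i ≤ V.Vplus hT f i := by
  unfold QRep.Vplus
  by_cases h1 : Ω.Behind f i
  · rw [if_pos h1]; exact le_top
  rw [if_neg h1]
  unfold QRep.Vminus
  by_cases h2 : Ω.InFront e i
  · rw [if_pos h2]; exact bot_le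
  rw [if_neg h2]
  have hbi : Ω.Behind e i := (behind_or_infront hT e i).resolve_right h2
  have hmem : Ω.t e ∈ (Qvr.treeWalk hT (Ω.t f) i).support :=
    (Qvr.treeWalk hT (Ω.t f) i).snd_mem_support_of_mem_edges
      (mem_edges_of_cross hS hT e _ hf hbi)
  exact transportTo_bot_le V hT hmem ⊤

lemma vminus_le_vminus (hS : Ω.Simple) (hT : Ω.graph.IsTree) {α : Set Ω.V}
    (hα : Ω.ConnSub α) {e f : Ω.A} (hse : Ω.s e ∈ α) (hte : Ω.t e ∈ α)
    (hsf : Ω.s f ∈ α) (htf : Ω.t f ∉ α) (hsf_front : Ω.InFront e (Ω.s f)) (i : Ω.V) :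
    V.Vminus hT e i ≤ V.Vminus hT f i := by
  have htfe : Ω.InFront e (Ω.t f) := by
    rcases behind_or_infront hT e (Ω.t f) with h | h
    · exact absurd ((arrow_eq_of_straddle' hS hT h hsf_front) ▸ hte) htf
    · exact h
  unfold QRep.Vminus
  by_cases h1 : Ω.InFront f i
  · rw [if_pos h1]
    have hfe : Ω.InFront e i := by
      by_contra h2
      have hbi : Ω.Behind e i := (behind_or_infront hT e i).resolve_right h2
      obtain ⟨w1, hw1⟩ := exists_walk_in hα hsf hse
      have h3 : Ω.Behind f (Ω.s e) :=
        reach_del_of_avoid_t f w1 (fun hmem => htf (hw1 _ hmem))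
      obtain ⟨w2⟩ := h1
      have hedge : s(Ω.s e, Ω.t e) ∈ (w2.mapLe (SimpleGraph.deleteEdges_le _)).edges :=
        mem_edges_of_cross hS hT e _ htfe hbi
      have hse_supp : Ω.s e ∈ (w2.mapLe (SimpleGraph.deleteEdges_le _)).support :=
        (w2.mapLe (SimpleGraph.deleteEdges_le _)).fst_mem_support_of_mem_edges hedge
      have hse_supp2 : Ω.s e ∈ w2.support := by
        simpa [SimpleGraph.Walk.support_map, SimpleGraph.Walk.support_mapLe_eq_support,
          List.map_id'] using hse_supp
      have h4 : Ω.InFront f (Ω.s e) := (w2.takeUntil _ hse_supp2).reachable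
      exact not_behind_infront hS hT f (Ω.s e) ⟨h3, h4⟩
    rw [if_pos hfe]
  · rw [if_neg h1]
    by_cases h2 : Ω.InFront e i
    · rw [if_pos h2]; exact bot_le
    rw [if_neg h2]
    have hbi : Ω.Behind e i := (behind_or_infront hT e i).resolve_right h2
    have hmem : Ω.t e ∈ (Qvr.treeWalk hT (Ω.t f) i).support :=
      (Qvr.treeWalk hT (Ω.t f) i).snd_mem_support_of_mem_edges
        (mem_edges_of_cross hS hT e _ htfe hbi)
    exact transportTo_bot_le V hT hmem ⊥

lemma vminus_le_veplus (hS : Ω.Simple) (hT : Ω.graph.IsTree) {e : Ω.A}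
    {E : Qvr.VirtArrow Ω} (hx : ∃ x, E.mem x ∧ Ω.InFront e x) (i : Ω.V) :
    V.Vminus hT e i ≤ V.VEplus hT E i := by
  unfold QRep.VEplus
  by_cases hiE : E.mem i
  · rw [if_pos hiE]; exact le_top
  rw [if_neg hiE]
  by_cases h2 : Ω.InFront e i
  · refine le_trans (le_of_eq ?_) bot_le
    unfold QRep.Vminus; rw [if_pos h2]
  have hbi : Ω.Behind e i := (behind_or_infront hT e i).resolve_right h2
  obtain ⟨j, hjmem, hgate⟩ := gate_exists hT E i
  refine le_trans ?_ (le_iSup₂ (f := fun j _ => V.transportTo hT j ⊤ i) j ⟨hjmem, hgate⟩)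
  unfold QRep.Vminus
  rw [if_neg h2]
  by_cases hj : Ω.InFront e j
  · have hmem : Ω.t e ∈ (Qvr.treeWalk hT j i).support :=
      (Qvr.treeWalk hT j i).snd_mem_support_of_mem_edges
        (mem_edges_of_cross hS hT e _ hj hbi)
    exact transportTo_bot_le V hT hmem ⊤
  · have hbj : Ω.Behind e j := (behind_or_infront hT e j).resolve_right hj
    obtain ⟨x, hxE, hxf⟩ := hx
    have hcross := virt_cross hS hT E e hjmem hxE hbj hxf
    have hjsupp : j ∈ (Qvr.treeWalk hT (Ω.t e) i).support :=
      gate_mem_support hS hT E hjmem hgate hcross.2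
    exact transportTo_le_top V hT hjsupp ⊥

theorem red_le (hS : Ω.Simple) (hT : Ω.graph.IsTree) {α : Set Ω.V} (hα : Ω.ConnSub α)
    (e : Ω.A) (hse : Ω.s e ∈ α) (hte : Ω.t e ∈ α) (i : Ω.V) :
    V.Fsub hT {j ∈ α | Ω.Behind e j} i ≤ V.Fsub hT α i := by
  set β : Set Ω.V := {j ∈ α | Ω.Behind e j} with hβ
  have heOut : e ∈ Ω.OutBdry β :=
    ⟨⟨hse, Reachable.refl _⟩,
      fun h => not_behind_infront hS hT e (Ω.t e) ⟨h.2, Reachable.refl _⟩⟩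
  have hVm : V.Fsub hT β i ≤ V.Vminus hT e i := Fsub_le_out V hT heOut i
  refine le_Fsub V hT ?_ ?_ ?_
  · intro f hf
    by_cases hb : Ω.Behind e (Ω.t f)
    · exact Fsub_le_in V hT (S := β) ⟨⟨hf.1, hb⟩, fun h => hf.2 h.1⟩ i
    · exact le_trans hVm
        (vminus_le_vplus V hS hT ((behind_or_infront hT e (Ω.t f)).resolve_left hb) i)
  · intro f hf
    by_cases hb : Ω.Behind e (Ω.s f)
    · exact Fsub_le_out V hT (S := β) ⟨⟨hf.1, hb⟩, fun h => hf.2 h.1⟩ i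
    · exact le_trans hVm (vminus_le_vminus V hS hT hα hse hte hf.1 hf.2
        ((behind_or_infront hT e (Ω.s f)).resolve_left hb) i)
  · intro E hE
    by_cases hin : ∀ x, E.mem x → x ∈ β
    · exact Fsub_le_virt V hT hin i
    · push_neg at hin
      obtain ⟨x, hxE, hxβ⟩ := hin
      have hxα : x ∈ α := hE x hxE
      have hxfr : Ω.InFront e x :=
        (behind_or_infront hT e x).resolve_left (fun hbx => hxβ ⟨hxα, hbx⟩)
      exact le_trans hVm (vminus_le_veplus V hS hT ⟨x, hxE, hxfr⟩ i)

lemma veplus_le_trans_top (hS : Ω.Simple) (hT : Ω.graph.IsTree) {e : Ω.A}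
    {E : Qvr.VirtArrow Ω} (hEb : ∀ x, E.mem x → Ω.Behind e x) {i : Ω.V}
    (hfi : Ω.InFront e i) :
    V.VEplus hT E i ≤ V.transportTo hT (Ω.t e) ⊤ i := by
  unfold QRep.VEplus
  have hiE : ¬ E.mem i := fun h => not_behind_infront hS hT e i ⟨hEb i h, hfi⟩
  rw [if_neg hiE]
  refine iSup₂_le ?_
  intro j hj
  have hmem : Ω.t e ∈ (Qvr.treeWalk hT j i).support :=
    (Qvr.treeWalk hT j i).snd_mem_support_of_mem_edges
      (mem_edges_of_cross' hS hT e _ (hEb j hj.1) hfi)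
  exact transportTo_le_top V hT hmem ⊤

theorem enh_le (hS : Ω.Simple) (hT : Ω.graph.IsTree) (hEO : Ω.EventuallyOutward)
    {β : Set Ω.V} (hβ : Ω.ConnSub β) (e : Ω.A) (hse : Ω.s e ∈ β) (hte : Ω.t e ∈ β)
    (i : Ω.V) :
    V.Fsub hT β i ≤ V.Fsub hT {j ∈ β | Ω.InFront e j} i := by
  set α : Set Ω.V := {j ∈ β | Ω.InFront e j} with hα
  set T' : Set Ω.V := {j ∈ β | Ω.Behind e j} with hT'
  have hseT : Ω.s e ∈ T' := ⟨hse, Reachable.refl _⟩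
  have hteT : Ω.t e ∉ T' := fun h => not_behind_infront hS hT e (Ω.t e) ⟨h.2, Reachable.refl _⟩
  have main : V.Fsub hT β i ≤ V.Vplus hT e i := by
    unfold QRep.Vplus
    by_cases hbi : Ω.Behind e i
    · rw [if_pos hbi]; exact le_top
    rw [if_neg hbi]
    have hfi : Ω.InFront e i := (behind_or_infront hT e i).resolve_left hbi
    by_cases hA : ∃ g, Ω.t g ∈ T' ∧ Ω.s g ∉ β
    · obtain ⟨g, hgT, hgs⟩ := hA
      refine le_trans (Fsub_le_in V hT ⟨hgT.1, hgs⟩ i) ?_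
      have hge : g ≠ e := fun h => hgs (h ▸ hse)
      have hsgB : Ω.Behind e (Ω.s g) := by
        rcases behind_or_infront hT e (Ω.s g) with h | h
        · exact h
        · exact absurd (arrow_eq_of_straddle' hS hT hgT.2 h) hge
      have hfg : Ω.InFront g i := by
        obtain ⟨w1, hw1⟩ := exists_walk_in hβ hgT.1 hte
        obtain ⟨w2⟩ := hfi
        refine reach_del_of_avoid_s g
          (w1.append (w2.mapLe (SimpleGraph.deleteEdges_le _))) ?_
        intro hmem
        rcases (SimpleGraph.Walk.mem_support_append_iff _ _).mp hmem with hmem | hmem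
        · exact hgs (hw1 _ hmem)
        · have hmem2 : Ω.s g ∈ w2.support := by
            simpa [SimpleGraph.Walk.support_map, SimpleGraph.Walk.support_mapLe_eq_support,
              List.map_id'] using hmem
          exact not_behind_infront hS hT e (Ω.s g)
            ⟨hsgB, (w2.takeUntil _ hmem2).reachable⟩
      have hnb : ¬ Ω.Behind g i := fun h => not_behind_infront hS hT g i ⟨h, hfg⟩
      unfold QRep.Vplus
      rw [if_neg hnb]
      have hmem : Ω.t e ∈ (Qvr.treeWalk hT (Ω.t g) i).support :=
        (Qvr.treeWalk hT (Ω.t g) i).snd_mem_support_of_mem_edges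
          (mem_edges_of_cross' hS hT e _ hgT.2 hfi)
      exact transportTo_le_top V hT hmem ⊤
    by_cases hB : ∃ g, Ω.s g ∈ T' ∧ Ω.t g ∉ β
    · obtain ⟨g, hgT, hgt⟩ := hB
      refine le_trans (Fsub_le_out V hT ⟨hgT.1, hgt⟩ i) ?_
      have hge : g ≠ e := fun h => hgt (h ▸ hte)
      have htgB : Ω.Behind e (Ω.t g) := by
        rcases behind_or_infront hT e (Ω.t g) with h | h
        · exact h
        · exact absurd (arrow_eq_of_straddle hS hT hgT.2 h) hge
      unfold QRep.Vminus
      by_cases h1 : Ω.InFront g i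
      · rw [if_pos h1]; exact bot_le
      rw [if_neg h1]
      have hmem : Ω.t e ∈ (Qvr.treeWalk hT (Ω.t g) i).support :=
        (Qvr.treeWalk hT (Ω.t g) i).snd_mem_support_of_mem_edges
          (mem_edges_of_cross' hS hT e _ htgB hfi)
      exact transportTo_le_top V hT hmem ⊥
    push_neg at hA hB
    have hclosed : ∀ g : Ω.A, g ≠ e → (Ω.s g ∈ T' ∨ Ω.t g ∈ T') →
        (Ω.s g ∈ T' ∧ Ω.t g ∈ T') := by
      intro g hge hginc
      rcases hginc with h | h
      · have htg : Ω.t g ∈ β := hB g h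
        have htgB : Ω.Behind e (Ω.t g) := by
          rcases behind_or_infront hT e (Ω.t g) with h' | h'
          · exact h'
          · exact absurd (arrow_eq_of_straddle hS hT h.2 h') hge
        exact ⟨h, by rw [hT']; exact ⟨htg, htgB⟩⟩
      · have hsg : Ω.s g ∈ β := hA g h
        have hsgB : Ω.Behind e (Ω.s g) := by
          rcases behind_or_infront hT e (Ω.s g) with h' | h'
          · exact h'
          · exact absurd (arrow_eq_of_straddle' hS hT h.2 h') hge
        exact ⟨by rw [hT']; exact ⟨hsg, hsgB⟩, h⟩
    by_cases hleaf : ∃ v ∈ T', Ω.IsLeaf v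
    · obtain ⟨v, hvT, hv⟩ := hleaf
      have hEB : StmtAux.virtSingle v hv e ∈ Ω.VirtBdry β := by
        intro x hx
        exact ((virtSingle_mem hx) ▸ hvT).1
      refine le_trans (Fsub_le_virt V hT hEB i) ?_
      refine veplus_le_trans_top V hS hT ?_ hfi
      intro x hx
      exact ((virtSingle_mem hx) ▸ hvT).2
    · have hnoleaf : ∀ v ∈ T', ¬ Ω.IsLeaf v := by push_neg at hleaf; exact hleaf
      obtain ⟨E, hET⟩ := exists_virt_in hS hT hseT hteT hclosed hnoleaf hEO
      have hEB : E ∈ Ω.VirtBdry β := fun x hx => (hET x hx).1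
      refine le_trans (Fsub_le_virt V hT hEB i) ?_
      exact veplus_le_trans_top V hS hT (fun x hx => (hET x hx).2) hfi
  refine le_Fsub V hT ?_ ?_ ?_
  · intro f hf
    by_cases hsb : Ω.s f ∈ β
    · have hsfB : Ω.Behind e (Ω.s f) := by
        rcases behind_or_infront hT e (Ω.s f) with h | h
        · exact h
        · exact absurd (⟨hsb, h⟩ : Ω.s f ∈ α) hf.2
      have hfe : f = e := arrow_eq_of_straddle hS hT hsfB hf.1.2
      rw [hfe]
      exact main
    · exact Fsub_le_in V hT ⟨hf.1.1, hsb⟩ i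
  · intro f hf
    by_cases htb : Ω.t f ∈ β
    · have htfB : Ω.Behind e (Ω.t f) := by
        rcases behind_or_infront hT e (Ω.t f) with h | h
        · exact h
        · exact absurd (⟨htb, h⟩ : Ω.t f ∈ α) hf.2
      have hfe : f = e := arrow_eq_of_straddle' hS hT htfB hf.1.2
      exact absurd (hfe ▸ hf.1.2)
        (fun h => not_behind_infront hS hT e (Ω.s e) ⟨Reachable.refl _, h⟩)
    · exact Fsub_le_out V hT ⟨hf.1.1, htb⟩ i
  · intro E hE
    exact Fsub_le_virt V hT (fun x hx => (hE x hx).1) i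

lemma move_le (hS : Ω.Simple) (hT : Ω.graph.IsTree) (hEO : Ω.EventuallyOutward)
    {a b : Ω.CC} (h : Ω.Move a.1 b.1) (i : Ω.V) :
    V.Fsub hT b.1 i ≤ V.Fsub hT a.1 i := by
  rcases h with ⟨e, hse, hte, hred⟩ | ⟨e, hse, hte, henh⟩
  · rw [hred]
    exact red_le V hS hT a.2 e hse hte i
  · rw [henh]
    exact enh_le V hS hT hEO b.2 e hse hte i

end StmtAux
/-- Let `Ω` be an eventually outward finitely branched tree quiver, `𝒞`
its poset of connected full subquivers ordered by the reduction/enhancement order, and `V`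
a representation of `Ω` over a field `𝔽`.  Then `α ↦ F^α` is a poset filtration:
if `β ≤ α` in `𝒞` then `F^β ⊆ F^α`. -/
theorem stmt5 (Ω : Qvr) (hS : Ω.Simple) (hT : Ω.graph.IsTree)
    (hEO : Ω.EventuallyOutward) (hFB : Ω.FinitelyBranched)
    {𝔽 : Type} [Field 𝔽] (V : QRep Ω 𝔽)
    (α β : Ω.CC) (hle : β = α ∨ Ω.GtC α β) (i : Ω.V) :
    V.Fsub hT β.1 i ≤ V.Fsub hT α.1 i := by
  rcases hle with rfl | hgt
  · exact le_rfl
  · have hgt' : Relation.TransGen (fun x y : Ω.CC => Ω.Move x.1 y.1) α β := hgt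
    clear hgt
    induction hgt' with
    | single h => exact StmtAux.move_le V hS hT hEO h i
    | tail hab hbc ih => exact le_trans (StmtAux.move_le V hS hT hEO hbc i) ih
end
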